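/- arXiv:2111.13860 — 6 statements merged into one kernel-verified Lean document; each statement's English description precedes it below -/
import Mathlib

section
/- If K is a compact Hausdorff space and H is a closed hyperplane of C(K) (that is, H is the kernel of a nonzero continuous linear functional on C(K)), then H is a C-space. In particular, for distinct points x₀, x₁ ∈ K, the hyperplane {g ∈ C(K) : g(x₀) = g(x₁)} is isometrically isomorphic to C(K̃), where K̃ is the quotient space of K obtained by identifying the points x₀ and x₁ (a compact Hausdorff space). -/
/-- A Banach space is a *C-space* if it is isomorphic (via a continuous linear
equivalence) to `C(K, ℝ)` for some compact Hausdorff space `K`. -/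
def IsCSpace (X : Type*) [NormedAddCommGroup X] [NormedSpace ℝ X] : Prop :=
  ∃ (K : Type) (_ : TopologicalSpace K) (_ : CompactSpace K) (_ : T2Space K),
    Nonempty (X ≃L[ℝ] C(K, ℝ))

/-- The setoid on `K` identifying the two points `x₀` and `x₁`. -/
def glueSetoid {K : Type*} (x₀ x₁ : K) : Setoid K :=
  ⟨fun a b => a = b ∨ (a = x₀ ∧ b = x₁) ∨ (a = x₁ ∧ b = x₀), by
    constructor
    · intro a; exact Or.inl rfl
    · intro a b h; tauto
    · intro a b c hab hbc
      rcases hab with h1 | ⟨h1, h2⟩ | ⟨h1, h2⟩ <;> rcases hbc with h3 | ⟨h3, h4⟩ | ⟨h3, h4⟩ <;>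
        subst h1 <;> try subst h3
      all_goals tauto⟩

/-- The hyperplane `{g ∈ C(K, ℝ) : g x₀ = g x₁}`, as a submodule of `C(K, ℝ)`. -/
def eqHyperplane (K : Type*) [TopologicalSpace K] (x₀ x₁ : K) : Submodule ℝ C(K, ℝ) where
  carrier := {g : C(K, ℝ) | g x₀ = g x₁}
  add_mem' := by
    intro a b ha hb
    simp only [Set.mem_setOf_eq, ContinuousMap.add_apply] at *
    rw [ha, hb]
  zero_mem' := by simp
  smul_mem' := by
    intro c a ha
    simp only [Set.mem_setOf_eq, ContinuousMap.smul_apply] at *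
    rw [ha]

/-!
Any two closed hyperplanes `ker φ`, `ker ψ` of a topological vector space are isomorphic: there is
a vector `w` with `φ w ≠ 0 ≠ ψ w`, both hyperplanes are complements of the line through `w`, and
projecting along `w` maps each onto the other. If `K` has two points `x₀ ≠ x₁`, it therefore
suffices to treat the hyperplane `g x₀ = g x₁`, which composition with the quotient map
`K → K̃` identifies isometrically with `C(K̃)`; the quotient `K̃` is Hausdorff because, by
Urysohn's lemma, the functions with `g x₀ = g x₁` separate its points. If `K` has at most one
point, a closed hyperplane of `C(K)` is `0 ≅ C(∅)`.
-/

namespace ContinuousLinearMap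

variable {𝕜 E : Type*} [Field 𝕜] [TopologicalSpace 𝕜] [AddCommGroup E] [TopologicalSpace E]
  [Module 𝕜 E]

theorem exists_apply_ne_zero_and_apply_ne_zero {φ ψ : E →L[𝕜] 𝕜} (hφ : φ ≠ 0) (hψ : ψ ≠ 0) :
    ∃ w, φ w ≠ 0 ∧ ψ w ≠ 0 := by
  obtain ⟨u, hu⟩ := DFunLike.ne_iff.1 hφ
  obtain ⟨v, hv⟩ := DFunLike.ne_iff.1 hψ
  by_cases hψu : ψ u = 0
  · by_cases hφv : φ v = 0
    · exact ⟨u + v, by simpa [hφv] using hu, by simpa [hψu] using hv⟩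
    · exact ⟨v, hφv, hv⟩
  · exact ⟨u, hu, hψu⟩

variable [IsTopologicalRing 𝕜] [IsTopologicalAddGroup E] [ContinuousSMul 𝕜 E]

noncomputable def projKerAlong (ψ : E →L[𝕜] 𝕜) (w : E) : E →L[𝕜] E :=
  .id 𝕜 E - ((ψ w)⁻¹ • ψ).smulRight w

theorem projKerAlong_apply (ψ : E →L[𝕜] 𝕜) (w x : E) :
    projKerAlong ψ w x = x - ((ψ w)⁻¹ * ψ x) • w := by
  simp [projKerAlong]

theorem apply_projKerAlong {ψ : E →L[𝕜] 𝕜} {w : E} (hw : ψ w ≠ 0) (x : E) :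
    ψ (projKerAlong ψ w x) = 0 := by
  rw [projKerAlong_apply, map_sub, map_smul, smul_eq_mul, mul_right_comm, inv_mul_cancel₀ hw,
    one_mul, sub_self]

theorem projKerAlong_projKerAlong {φ : E →L[𝕜] 𝕜} (ψ : E →L[𝕜] 𝕜) {w : E} (hw : φ w ≠ 0)
    {x : E} (hx : φ x = 0) : projKerAlong φ w (projKerAlong ψ w x) = x := by
  simp only [projKerAlong_apply, map_sub, map_smul, hx]
  match_scalars
  · ring
  · field_simp
    ring

noncomputable def kerEquivKerAlong {φ ψ : E →L[𝕜] 𝕜} {w : E} (hφ : φ w ≠ 0) (hψ : ψ w ≠ 0) :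
    LinearMap.ker (φ : E →ₗ[𝕜] 𝕜) ≃L[𝕜] LinearMap.ker (ψ : E →ₗ[𝕜] 𝕜) :=
  .equivOfInverse
    ((projKerAlong ψ w ∘L (LinearMap.ker (φ : E →ₗ[𝕜] 𝕜)).subtypeL).codRestrict _
      fun x => apply_projKerAlong hψ x)
    ((projKerAlong φ w ∘L (LinearMap.ker (ψ : E →ₗ[𝕜] 𝕜)).subtypeL).codRestrict _
      fun x => apply_projKerAlong hφ x)
    (fun x => Subtype.ext (projKerAlong_projKerAlong ψ hφ x.2))
    (fun x => Subtype.ext (projKerAlong_projKerAlong φ hψ x.2))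

theorem nonempty_kerEquivKer {φ ψ : E →L[𝕜] 𝕜} (hφ : φ ≠ 0) (hψ : ψ ≠ 0) :
    Nonempty (LinearMap.ker (φ : E →ₗ[𝕜] 𝕜) ≃L[𝕜] LinearMap.ker (ψ : E →ₗ[𝕜] 𝕜)) :=
  let ⟨_, hφw, hψw⟩ := exists_apply_ne_zero_and_apply_ne_zero hφ hψ
  ⟨kerEquivKerAlong hφw hψw⟩

end ContinuousLinearMap

namespace ContinuousMap

theorem norm_comp_of_surjective {X Y E : Type*} [TopologicalSpace X] [CompactSpace X]
    [TopologicalSpace Y] [CompactSpace Y] [SeminormedAddCommGroup E] (f : C(Y, E)) {π : C(X, Y)}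
    (hπ : Function.Surjective π) : ‖f.comp π‖ = ‖f‖ := by
  refine le_antisymm ((norm_le _ (norm_nonneg _)).2 fun x => f.norm_coe_le_norm (π x)) ?_
  refine (norm_le _ (norm_nonneg _)).2 fun y => ?_
  obtain ⟨x, rfl⟩ := hπ y
  exact (f.comp π).norm_coe_le_norm x

theorem ker_eq_bot_of_subsingleton {K 𝕜 : Type*} [TopologicalSpace K] [Subsingleton K] [Field 𝕜]
    [TopologicalSpace 𝕜] [IsTopologicalRing 𝕜] {φ : C(K, 𝕜) →ₗ[𝕜] 𝕜} (hφ : φ ≠ 0) :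
    LinearMap.ker φ = ⊥ := by
  obtain ⟨f, hf⟩ := DFunLike.ne_iff.1 hφ
  refine LinearMap.ker_eq_bot'.2 fun g hg => ?_
  by_contra hg0
  obtain ⟨z, hz⟩ := DFunLike.ne_iff.1 hg0
  have hfg : g z • f = f z • g := by
    ext a
    simp [Subsingleton.elim a z, mul_comm]
  have := congrArg φ hfg
  simp only [map_smul, hg, smul_eq_mul, mul_zero, mul_eq_zero] at this
  exact this.elim hz hf

end ContinuousMap

theorem isCSpace_of_subsingleton (X : Type*) [NormedAddCommGroup X] [NormedSpace ℝ X]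
    [Subsingleton X] : IsCSpace X :=
  ⟨Empty, ⊥, inferInstance, inferInstance,
    ⟨.equivOfInverse 0 0 (fun _ => Subsingleton.elim _ _) (fun _ => Subsingleton.elim _ _)⟩⟩

theorem Quotient.t2Space_of_separating {X : Type*} [TopologicalSpace X] (s : Setoid X)
    (h : ∀ x y, ¬ s x y → ∃ g : C(X, ℝ), (∀ a b, s a b → g a = g b) ∧ g x ≠ g y) :
    T2Space (Quotient s) := by
  refine ⟨fun q q' hne => ?_⟩
  induction q, q' using Quotient.inductionOn₂ with | h x y => ?_
  obtain ⟨g, hg, hxy⟩ := h x y fun hr => hne (Quotient.sound hr)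
  exact separated_by_continuous (g.continuous.quotient_lift hg) hxy

section Glue

variable {K : Type*} {x₀ x₁ : K}

theorem glueSetoid_rel_left_right : glueSetoid x₀ x₁ x₀ x₁ := Or.inr (Or.inl ⟨rfl, rfl⟩)

theorem glueSetoid_setOf_rel_subset (x : K) :
    {z | glueSetoid x₀ x₁ z x} ⊆ {x, x₀, x₁} := by
  rintro z (rfl | ⟨rfl, -⟩ | ⟨rfl, -⟩) <;> simp

theorem apply_eq_of_glueSetoid_rel {α : Type*} {g : K → α} (hg : g x₀ = g x₁) {a b : K}
    (hab : glueSetoid x₀ x₁ a b) : g a = g b := by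
  rcases hab with rfl | ⟨rfl, rfl⟩ | ⟨rfl, rfl⟩
  exacts [rfl, hg, hg.symm]

variable [TopologicalSpace K]

theorem exists_continuousMap_separating_glueSetoid [NormalSpace K] [T1Space K] {x y : K}
    (hxy : ¬ glueSetoid x₀ x₁ x y) :
    ∃ g : C(K, ℝ), g x₀ = g x₁ ∧ g x ≠ g y := by
  set s := glueSetoid x₀ x₁
  -- `{x₀, x₁}` lies in one class, hence entirely in `A` or entirely in `B`
  set A := {z | s z x}
  set B := {z | s z y} ∪ ({x₀, x₁} \ A)
  have hA : IsClosed A := ((Set.toFinite _).subset (glueSetoid_setOf_rel_subset x)).isClosed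
  have hB : IsClosed B := by
    refine ((Set.toFinite ({y, x₀, x₁} : Set K)).subset ?_).isClosed
    refine Set.union_subset (glueSetoid_setOf_rel_subset y) fun z hz => ?_
    rcases hz.1 with rfl | rfl <;> simp
  have hAB : Disjoint A B := by
    refine Set.disjoint_left.2 fun z hzx hz => hz.elim (fun hzy => hxy ?_) fun hz' => hz'.2 hzx
    exact s.trans (s.symm hzx) hzy
  obtain ⟨g, hgA, hgB, -⟩ := exists_continuous_zero_one_of_isClosed hA hB hAB
  refine ⟨g, ?_, ?_⟩
  · by_cases h₀ : x₀ ∈ A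
    · have h₁ : x₁ ∈ A := s.trans (s.symm glueSetoid_rel_left_right) h₀
      exact (hgA h₀).trans (hgA h₁).symm
    · have h₁ : x₁ ∉ A := fun h₁ => h₀ (s.trans glueSetoid_rel_left_right h₁)
      exact (hgB (Or.inr ⟨by simp, h₀⟩)).trans (hgB (Or.inr ⟨by simp, h₁⟩)).symm
  · rw [hgA (s.refl x), hgB (Or.inl (s.refl y))]
    exact zero_ne_one

instance [NormalSpace K] [T1Space K] : T2Space (Quotient (glueSetoid x₀ x₁)) :=
  Quotient.t2Space_of_separating _ fun _ _ hxy =>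
    let ⟨g, hg, hxy⟩ := exists_continuousMap_separating_glueSetoid hxy
    ⟨g, fun _ _ => apply_eq_of_glueSetoid_rel hg, hxy⟩

variable [CompactSpace K]

noncomputable def glueEquiv (x₀ x₁ : K) :
    C(Quotient (glueSetoid x₀ x₁), ℝ) ≃ₗᵢ[ℝ] eqHyperplane K x₀ x₁ where
  toFun f := ⟨f.comp ⟨Quotient.mk _, continuous_quotient_mk'⟩,
    congrArg f (Quotient.sound glueSetoid_rel_left_right)⟩
  invFun g := ⟨Quotient.lift g fun _ _ => apply_eq_of_glueSetoid_rel g.2,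
    (g : C(K, ℝ)).continuous.quotient_lift _⟩
  map_add' _ _ := rfl
  map_smul' _ _ := rfl
  left_inv f := by ext q; induction q using Quotient.inductionOn; rfl
  right_inv _ := rfl
  norm_map' f := f.norm_comp_of_surjective Quotient.mk_surjective

end Glue

section EvalDiff

variable {K : Type*} [TopologicalSpace K]

theorem ker_evalCLM_sub_evalCLM (x₀ x₁ : K) :
    LinearMap.ker ((ContinuousMap.evalCLM ℝ x₀ - ContinuousMap.evalCLM ℝ x₁ : C(K, ℝ) →L[ℝ] ℝ) :
      C(K, ℝ) →ₗ[ℝ] ℝ) = eqHyperplane K x₀ x₁ := by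
  ext g
  exact sub_eq_zero

theorem evalCLM_sub_evalCLM_ne_zero [NormalSpace K] [T1Space K] {x₀ x₁ : K} (h : x₀ ≠ x₁) :
    (ContinuousMap.evalCLM ℝ x₀ - ContinuousMap.evalCLM ℝ x₁ : C(K, ℝ) →L[ℝ] ℝ) ≠ 0 := by
  obtain ⟨g, hg₀, hg₁, -⟩ := exists_continuous_zero_one_of_isClosed isClosed_singleton
    isClosed_singleton (Set.disjoint_singleton.2 h)
  refine DFunLike.ne_iff.2 ⟨g, ?_⟩
  simp [hg₀ rfl, hg₁ rfl]

end EvalDiff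

/-- A closed hyperplane (the kernel of a nonzero continuous linear functional) in `C(K)`
is a C-space; moreover, for distinct `x₀, x₁ ∈ K` the hyperplane
`{g : g x₀ = g x₁}` is isometrically isomorphic to `C(K̃)` where `K̃` is the compact
Hausdorff quotient of `K` identifying `x₀` and `x₁`. -/
theorem statement1 (K : Type) [TopologicalSpace K] [CompactSpace K] [T2Space K] :
    (∀ φ : C(K, ℝ) →L[ℝ] ℝ, φ ≠ 0 → IsCSpace ↥(LinearMap.ker (φ : C(K, ℝ) →ₗ[ℝ] ℝ))) ∧
    (∀ x₀ x₁ : K, x₀ ≠ x₁ →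
      ∃ (_ : CompactSpace (Quotient (glueSetoid x₀ x₁)))
        (_ : T2Space (Quotient (glueSetoid x₀ x₁))),
        Nonempty (↥(eqHyperplane K x₀ x₁) ≃ₗᵢ[ℝ] C(Quotient (glueSetoid x₀ x₁), ℝ))) := by
  refine ⟨fun φ hφ => ?_, fun x₀ x₁ _ => ⟨inferInstance, inferInstance, ⟨(glueEquiv x₀ x₁).symm⟩⟩⟩
  rcases subsingleton_or_nontrivial K with _ | _
  · have : Subsingleton (LinearMap.ker (φ : C(K, ℝ) →ₗ[ℝ] ℝ)) := by
      rw [ContinuousMap.ker_eq_bot_of_subsingleton (ContinuousLinearMap.coe_injective.ne hφ)]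
      infer_instance
    exact isCSpace_of_subsingleton _
  · obtain ⟨x₀, x₁, hne⟩ := exists_pair_ne K
    obtain ⟨e⟩ := ContinuousLinearMap.nonempty_kerEquivKer hφ (evalCLM_sub_evalCLM_ne_zero hne)
    rw [ker_evalCLM_sub_evalCLM] at e
    exact ⟨_, inferInstance, inferInstance, inferInstance,
      ⟨e.trans (glueEquiv x₀ x₁).symm.toContinuousLinearEquiv⟩⟩
end

section
/- Assume framework FR. There is a closed linear subspace X of JL(𝓑) such that JL(𝓑) is the internal direct sum of JL(𝓐) and X, and both JL(𝓐) and X are 1-complemented in JL(𝓑). Specifically, the map P defined for g ∈ JL(𝓑) by (Pg)(n,0) = (Pg)(n,1) = ½(g(n,0)+g(n,1)) is a bounded linear projection of norm 1 from JL(𝓑) onto JL(𝓐), and Q = I − P is a bounded linear projection of norm 1 from JL(𝓑) onto X = ker P. -/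
open scoped ENNReal Classical

/-- The underlying countable set `ω × 2`. -/
abbrev S2 : Type := ℕ × Fin 2

/-- The cylinder `C₀ × 2 ⊆ ω × 2`. -/
def cyl (C₀ : Set ℕ) : Set S2 := {s : S2 | s.1 ∈ C₀}

/-- The cylinder `c_n = {(n,0), (n,1)}`. -/
def cylAt (n : ℕ) : Set S2 := {s : S2 | s.1 = n}

/-- `B` splits the cylinder `C`: `B ⊆ C` and `B ∩ c_n` has exactly one element
whenever `c_n ⊆ C`. -/
def SplitsCyl (C B : Set S2) : Prop :=
  B ⊆ C ∧ ∀ n : ℕ, cylAt n ⊆ C → ∃! s : S2, s ∈ B ∩ cylAt n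

/-- The pair `(B₀, B₁)` is a splitting of the cylinder `C`. -/
def IsSplittingOf (C B0 B1 : Set S2) : Prop := SplitsCyl C B0 ∧ B1 = C \ B0

/-- The family `𝓑 = {B_A^i : A ∈ 𝓐, i ∈ {0,1}}`. -/
def famB (𝓐 : Set (Set S2)) (B0 B1 : Set S2 → Set S2) : Set (Set S2) :=
  {B : Set S2 | ∃ A ∈ 𝓐, B = B0 A ∨ B = B1 A}

/-- Framework FR(1)–FR(3): `𝓐` is an almost disjoint family of infinite cylinders in
`ω × 2`; for every `A ∈ 𝓐` the pair `B0 A, B1 A` is a splitting of `A`; and the family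
`𝓑 = {B_A^i}` is almost disjoint. -/
def FRhyp (𝓐 : Set (Set S2)) (B0 B1 : Set S2 → Set S2) : Prop :=
  (∀ A ∈ 𝓐, ∃ C₀ : Set ℕ, A = cyl C₀) ∧ (∀ A ∈ 𝓐, A.Infinite) ∧
    (∀ A ∈ 𝓐, ∀ A' ∈ 𝓐, A ≠ A' → (A ∩ A').Finite) ∧
    (∀ A ∈ 𝓐, IsSplittingOf A (B0 A) (B1 A)) ∧
    (∀ B ∈ famB 𝓐 B0 B1, ∀ B' ∈ famB 𝓐 B0 B1, B ≠ B' → (B ∩ B').Finite)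

/-- Membership in the algebra of sets generated by a family `G` of subsets of `S`. -/
inductive genAlgMem {S : Type*} (G : Set (Set S)) : Set S → Prop
  | base {A : Set S} : A ∈ G → genAlgMem G A
  | empty : genAlgMem G ∅
  | compl {A : Set S} : genAlgMem G A → genAlgMem G Aᶜ
  | union {A B : Set S} : genAlgMem G A → genAlgMem G B → genAlgMem G (A ∪ B)

/-- The algebra of subsets of `S` generated by a family `G`. -/
def genAlg {S : Type*} (G : Set (Set S)) : Set (Set S) := {A | genAlgMem G A}

/-- FR(4): the algebra `𝔄` generated by `𝓐 ∪ {c_n : n ∈ ω}`. -/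
def algA (𝓐 : Set (Set S2)) : Set (Set S2) := genAlg (𝓐 ∪ {C : Set S2 | ∃ n : ℕ, C = cylAt n})

/-- FR(5): the algebra `𝔅` generated by `𝓑 ∪ fin(ω × 2)`. -/
def algB (𝓐 : Set (Set S2)) (B0 B1 : Set S2 → Set S2) : Set (Set S2) :=
  genAlg (famB 𝓐 B0 B1 ∪ {F : Set S2 | F.Finite})

/-- The characteristic function of a set `B`, as an element of `ℓ∞`. -/
noncomputable def ind {S : Type*} (B : Set S) : lp (fun _ : S => ℝ) ∞ :=
  ⟨B.indicator (fun _ => (1 : ℝ)), by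
    apply memℓp_infty
    refine ⟨1, ?_⟩
    rintro x ⟨s, rfl⟩
    by_cases h : s ∈ B <;> simp [h]⟩

/-- The Johnson–Lindenstrauss space `JL(𝓐)` of the family of cylinders `𝓐`: the closed
linear span in `ℓ∞(ω × 2)` of the characteristic functions of members of `𝓐`, of finite
cylinders, and of the constant function `1`. -/
noncomputable def JLA (𝓐 : Set (Set S2)) : Submodule ℝ (lp (fun _ : S2 => ℝ) ∞) :=
  (Submodule.span ℝ (ind ''
      (𝓐 ∪ {C : Set S2 | ∃ F : Set ℕ, F.Finite ∧ C = cyl F} ∪ {Set.univ}))).topologicalClosure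

/-- The Johnson–Lindenstrauss space `JL(𝓑)`: the closed linear span in `ℓ∞(ω × 2)` of
the characteristic functions of members of `𝓑`, of finite sets, and of the constant
function `1`. -/
noncomputable def JLB (𝓐 : Set (Set S2)) (B0 B1 : Set S2 → Set S2) :
    Submodule ℝ (lp (fun _ : S2 => ℝ) ∞) :=
  (Submodule.span ℝ (ind ''
      (famB 𝓐 B0 B1 ∪ {F : Set S2 | F.Finite} ∪ {Set.univ}))).topologicalClosure

/-!
Averaging over the fibres `c_n`, `(Pf)(n, i) = (f(n, 0) + f(n, 1)) / 2`, is a contraction of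
`ℓ∞(ω × 2)`, and so is `f ↦ f - Pf`, since `(f - Pf)(n, i) = ±(f(n, 0) - f(n, 1)) / 2`.
Every generator of `JL(𝓐)` is the indicator of a cylinder, hence fixed by `P`; so `P` fixes
`JL(𝓐)`. Conversely `P` maps the generators of `JL(𝓑)` into `JL(𝓐)`: a set splitting a
cylinder `A` meets each fibre of `A` in one point, so it averages to `½ 1_A`, and a finite set
averages to a combination of indicators of finite cylinders. By continuity `P` maps `JL(𝓑)`
onto `JL(𝓐)`. The norms are exactly one because `P` fixes `1` and `I - P` fixes
`1_{(0,0)} - P 1_{(0,0)} ≠ 0`.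
-/

lemma abs_add_div_two_le {a b c : ℝ} (ha : |a| ≤ c) (hb : |b| ≤ c) : |(a + b) / 2| ≤ c := by
  obtain ⟨ha₁, ha₂⟩ := abs_le.1 ha
  obtain ⟨hb₁, hb₂⟩ := abs_le.1 hb
  exact abs_le.2 ⟨by linarith, by linarith⟩

lemma abs_sub_add_div_two_le {a b c : ℝ} (ha : |a| ≤ c) (hb : |b| ≤ c) :
    |a - (a + b) / 2| ≤ c := by
  obtain ⟨ha₁, ha₂⟩ := abs_le.1 ha
  obtain ⟨hb₁, hb₂⟩ := abs_le.1 hb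
  exact abs_le.2 ⟨by linarith, by linarith⟩

lemma lp.abs_apply_le_norm {ι : Type*} (f : lp (fun _ : ι => ℝ) ∞) (i : ι) : |f i| ≤ ‖f‖ :=
  lp.norm_apply_le_norm ENNReal.top_ne_zero f i

namespace ContinuousLinearMap

variable {𝕜 E : Type*} [NontriviallyNormedField 𝕜] [NormedAddCommGroup E] [NormedSpace 𝕜 E]

lemma opNorm_eq_one_of_apply_eq_self {T : E →L[𝕜] E} (hle : ∀ x, ‖T x‖ ≤ ‖x‖) {x : E}
    (hx : x ≠ 0) (hTx : T x = x) : ‖T‖ = 1 := by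
  refine le_antisymm (opNorm_le_bound _ zero_le_one fun y => (one_mul ‖y‖).symm ▸ hle y) ?_
  have := T.le_opNorm x
  rwa [hTx, le_mul_iff_one_le_left (norm_pos_iff.2 hx)] at this

variable {R M : Type*} [Ring R] [TopologicalSpace M] [AddCommGroup M] [IsTopologicalAddGroup M]
  [Module R M]

lemma range_id_sub_eq_ker {P : M →L[R] M} (hP : ∀ x, P (P x) = P x) :
    Set.range ⇑(ContinuousLinearMap.id R M - P) = (LinearMap.ker (P : M →ₗ[R] M) : Set M) := by
  ext x
  constructor
  · rintro ⟨y, rfl⟩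
    simp [hP]
  · intro hx
    exact ⟨x, by simpa using hx⟩

end ContinuousLinearMap

lemma LinearMap.existsUnique_add_mem_ker {R M : Type*} [Ring R] [AddCommGroup M] [Module R M]
    {P : M →ₗ[R] M} {U : Set M} (hPU : ∀ x, P x ∈ U) (hfix : ∀ x ∈ U, P x = x) (f : M) :
    ∃! q : M × M, q.1 ∈ U ∧ q.2 ∈ LinearMap.ker P ∧ f = q.1 + q.2 := by
  refine ⟨(P f, f - P f), ⟨hPU f, by simp [hfix _ (hPU f)], (add_sub_cancel _ _).symm⟩, ?_⟩
  rintro ⟨u, k⟩ ⟨hu, hk, rfl⟩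
  have hPuk : P (u + k) = u := by rw [map_add, hfix u hu, LinearMap.mem_ker.1 hk, add_zero]
  ext <;> simp [hPuk]

lemma ind_apply {S : Type*} (B : Set S) (s : S) : ind B s = B.indicator 1 s := rfl

lemma ind_sdiff {S : Type*} {s t : Set S} (h : s ⊆ t) : ind (t \ s) = ind t - ind s := by
  ext x
  exact congrFun (Set.indicator_sdiff h 1) x

lemma ind_univ_ne_zero {S : Type*} [Nonempty S] : ind (Set.univ : Set S) ≠ 0 := fun h => by
  simpa [ind_apply] using congrArg (fun f : lp (fun _ : S => ℝ) ∞ => f (Classical.arbitrary S)) h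

section FiberAverage

variable {α : Type*}

lemma abs_fiberMean_le (f : lp (fun _ : α × Fin 2 => ℝ) ∞) (a : α) :
    |(f (a, 0) + f (a, 1)) / 2| ≤ ‖f‖ :=
  abs_add_div_two_le (lp.abs_apply_le_norm f _) (lp.abs_apply_le_norm f _)

noncomputable def fiberAvg :
    lp (fun _ : α × Fin 2 => ℝ) ∞ →L[ℝ] lp (fun _ : α × Fin 2 => ℝ) ∞ :=
  LinearMap.mkContinuous
    { toFun f := ⟨fun s => (f (s.1, 0) + f (s.1, 1)) / 2,
        memℓp_infty ⟨‖f‖, by rintro _ ⟨s, rfl⟩; exact abs_fiberMean_le f s.1⟩⟩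
      map_add' f g := by ext s; simp only [lp.coeFn_add, Pi.add_apply]; ring
      map_smul' c f := by ext s; simp only [lp.coeFn_smul, Pi.smul_apply, smul_eq_mul,
        RingHom.id_apply]; ring }
    1 fun f => by
      rw [one_mul]
      exact lp.norm_le_of_forall_le (norm_nonneg f) fun s => abs_fiberMean_le f s.1

lemma fiberAvg_apply (f : lp (fun _ : α × Fin 2 => ℝ) ∞) (s : α × Fin 2) :
    fiberAvg f s = (f (s.1, 0) + f (s.1, 1)) / 2 := rfl

lemma norm_fiberAvg_apply_le (f : lp (fun _ : α × Fin 2 => ℝ) ∞) : ‖fiberAvg f‖ ≤ ‖f‖ :=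
  lp.norm_le_of_forall_le (norm_nonneg f) fun s => abs_fiberMean_le f s.1

lemma norm_sub_fiberAvg_apply_le (f : lp (fun _ : α × Fin 2 => ℝ) ∞) :
    ‖f - fiberAvg f‖ ≤ ‖f‖ := by
  refine lp.norm_le_of_forall_le (norm_nonneg f)
    (Prod.forall.2 fun a => Fin.forall_fin_two.2 ?_)
  have h₀ := lp.abs_apply_le_norm f (a, 0)
  have h₁ := lp.abs_apply_le_norm f (a, 1)
  simp only [lp.coeFn_sub, Pi.sub_apply, fiberAvg_apply, Real.norm_eq_abs]
  exact ⟨abs_sub_add_div_two_le h₀ h₁, add_comm (f (a, 0)) _ ▸ abs_sub_add_div_two_le h₁ h₀⟩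

lemma ind_singleton_sub_fiberAvg_ne_zero (a : α) :
    ind {(a, 0)} - fiberAvg (ind {(a, 0)}) ≠ 0 := fun h => by
  have := congrArg (fun f : lp (fun _ : α × Fin 2 => ℝ) ∞ => f (a, 0)) h
  norm_num [fiberAvg_apply, ind_apply] at this

end FiberAverage

lemma fiberAvg_ind_cyl (C₀ : Set ℕ) : fiberAvg (ind (cyl C₀)) = ind (cyl C₀) := by
  ext ⟨n, i⟩
  by_cases hn : n ∈ C₀ <;> simp [fiberAvg_apply, ind_apply, cyl, Set.indicator, hn]

lemma fiberAvg_ind (F : Set S2) :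
    fiberAvg (ind F) =
      (2 : ℝ)⁻¹ • (ind (cyl ((·, 0) ⁻¹' F)) + ind (cyl ((·, 1) ⁻¹' F))) := by
  ext ⟨n, i⟩
  simp only [fiberAvg_apply, lp.coeFn_smul, lp.coeFn_add, Pi.smul_apply, Pi.add_apply,
    ind_apply, smul_eq_mul]
  simp [cyl, Set.indicator]
  ring

lemma SplitsCyl.mem_iff_notMem {C₀ : Set ℕ} {B : Set S2} (h : SplitsCyl (cyl C₀) B) {n : ℕ}
    (hn : n ∈ C₀) : (n, 0) ∈ B ↔ (n, 1) ∉ B := by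
  obtain ⟨s, ⟨hsB, hsn⟩, huniq⟩ := h.2 n fun t (ht : t.1 = n) => show t.1 ∈ C₀ from ht ▸ hn
  obtain ⟨m, i⟩ := s
  obtain rfl : m = n := hsn
  constructor
  · intro h₀ h₁
    exact absurd ((huniq _ ⟨h₀, rfl⟩).trans (huniq _ ⟨h₁, rfl⟩).symm) (by simp)
  · intro h₁
    fin_cases i
    · exact hsB
    · exact absurd hsB h₁

lemma fiberAvg_ind_of_mem_iff_notMem {C₀ : Set ℕ} {B : Set S2} (hB : B ⊆ cyl C₀)
    (h : ∀ n ∈ C₀, (n, 0) ∈ B ↔ (n, 1) ∉ B) :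
    fiberAvg (ind B) = (2 : ℝ)⁻¹ • ind (cyl C₀) := by
  ext ⟨n, i⟩
  simp only [fiberAvg_apply, lp.coeFn_smul, Pi.smul_apply, ind_apply, smul_eq_mul]
  by_cases hn : n ∈ C₀
  · have hni : (n, i) ∈ cyl C₀ := hn
    by_cases h₀ : (n, 0) ∈ B
    · simp [Set.indicator, hni, h₀, (h n hn).1 h₀]
    · simp [Set.indicator, hni, h₀, not_not.1 (mt (h n hn).2 h₀)]
  · have hnB : ∀ j : Fin 2, (n, j) ∉ B := fun j hj => hn (hB hj)
    simp [Set.indicator, hnB, show (n, i) ∉ cyl C₀ from hn]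

lemma IsSplittingOf.fiberAvg_ind {C₀ : Set ℕ} {B0 B1 B : Set S2}
    (h : IsSplittingOf (cyl C₀) B0 B1) (hB : B = B0 ∨ B = B1) :
    fiberAvg (ind B) = (2 : ℝ)⁻¹ • ind (cyl C₀) := by
  obtain ⟨hsplit, rfl⟩ := h
  rcases hB with rfl | rfl
  · exact fiberAvg_ind_of_mem_iff_notMem hsplit.1 fun n hn => hsplit.mem_iff_notMem hn
  · refine fiberAvg_ind_of_mem_iff_notMem Set.sdiff_subset fun n hn => ?_
    have hmem : ∀ j : Fin 2, (n, j) ∈ cyl C₀ := fun _ => hn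
    have := hsplit.mem_iff_notMem hn
    simp only [Set.mem_sdiff, hmem, true_and]
    tauto

lemma ind_mem_JLA {𝓐 : Set (Set S2)} {C : Set S2}
    (hC : C ∈ 𝓐 ∪ {C : Set S2 | ∃ F : Set ℕ, F.Finite ∧ C = cyl F} ∪ {Set.univ}) :
    ind C ∈ JLA 𝓐 :=
  Submodule.le_topologicalClosure _ (Submodule.subset_span (Set.mem_image_of_mem ind hC))

lemma ind_mem_JLB {𝓐 : Set (Set S2)} {B0 B1 : Set S2 → Set S2} {C : Set S2}
    (hC : C ∈ famB 𝓐 B0 B1 ∪ {F : Set S2 | F.Finite} ∪ {Set.univ}) :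
    ind C ∈ JLB 𝓐 B0 B1 :=
  Submodule.le_topologicalClosure _ (Submodule.subset_span (Set.mem_image_of_mem ind hC))

lemma cyl_univ : cyl Set.univ = Set.univ := rfl

lemma JLA_le_JLB {𝓐 : Set (Set S2)} {B0 B1 : Set S2 → Set S2}
    (hsplit : ∀ A ∈ 𝓐, IsSplittingOf A (B0 A) (B1 A)) : JLA 𝓐 ≤ JLB 𝓐 B0 B1 := by
  refine Submodule.topologicalClosure_minimal _ (Submodule.span_le.2 ?_)
    (Submodule.isClosed_topologicalClosure _)
  rintro _ ⟨C, (hC | ⟨F, hF, rfl⟩) | rfl, rfl⟩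
  · obtain ⟨⟨hsub, -⟩, hB1⟩ := hsplit C hC
    rw [SetLike.mem_coe, ← sub_add_cancel (ind C) (ind (B0 C)), ← ind_sdiff hsub, ← hB1]
    exact add_mem (ind_mem_JLB (Or.inl (Or.inl ⟨C, hC, Or.inr rfl⟩)))
      (ind_mem_JLB (Or.inl (Or.inl ⟨C, hC, Or.inl rfl⟩)))
  · have hcylF : (cyl F).Finite := (hF.prod Set.finite_univ).subset fun s hs => ⟨hs, trivial⟩
    exact ind_mem_JLB (Or.inl (Or.inr hcylF))
  · exact ind_mem_JLB (Or.inr rfl)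

lemma fiberAvg_eq_self_of_mem_JLA {𝓐 : Set (Set S2)}
    (hcyl : ∀ A ∈ 𝓐, ∃ C₀ : Set ℕ, A = cyl C₀) {f : lp (fun _ : S2 => ℝ) ∞}
    (hf : f ∈ JLA 𝓐) : fiberAvg f = f := by
  suffices JLA 𝓐 ≤ LinearMap.ker
      (ContinuousLinearMap.id ℝ (lp (fun _ : S2 => ℝ) ∞) - fiberAvg).toLinearMap from
    (sub_eq_zero.1 (this hf)).symm
  refine Submodule.topologicalClosure_minimal _ (Submodule.span_le.2 ?_)
    (ContinuousLinearMap.isClosed_ker _)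
  rintro _ ⟨C, (hC | ⟨C₀, -, rfl⟩) | rfl, rfl⟩
  · obtain ⟨C₀, rfl⟩ := hcyl C hC
    simp [fiberAvg_ind_cyl]
  · simp [fiberAvg_ind_cyl]
  · simp [← cyl_univ, fiberAvg_ind_cyl]

lemma fiberAvg_mem_JLA {𝓐 : Set (Set S2)} {B0 B1 : Set S2 → Set S2}
    (hcyl : ∀ A ∈ 𝓐, ∃ C₀ : Set ℕ, A = cyl C₀)
    (hsplit : ∀ A ∈ 𝓐, IsSplittingOf A (B0 A) (B1 A)) {f : lp (fun _ : S2 => ℝ) ∞}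
    (hf : f ∈ JLB 𝓐 B0 B1) : fiberAvg f ∈ JLA 𝓐 := by
  suffices JLB 𝓐 B0 B1 ≤ (JLA 𝓐).comap (fiberAvg (α := ℕ)).toLinearMap from this hf
  refine Submodule.topologicalClosure_minimal _ (Submodule.span_le.2 ?_)
    ((Submodule.isClosed_topologicalClosure _).preimage fiberAvg.continuous)
  rintro _ ⟨C, (⟨A, hA, hC⟩ | hF) | rfl, rfl⟩
  · obtain ⟨C₀, rfl⟩ := hcyl A hA
    have : fiberAvg (ind C) = (2 : ℝ)⁻¹ • ind (cyl C₀) := (hsplit _ hA).fiberAvg_ind hC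
    simpa [this] using ind_mem_JLA (Or.inl (Or.inl hA))
  · have hrow : ∀ i : Fin 2, ind (cyl ((·, i) ⁻¹' C)) ∈ JLA 𝓐 := fun i =>
      ind_mem_JLA (Or.inl (Or.inr ⟨_, hF.preimage (Prod.mk_left_injective i).injOn, rfl⟩))
    simpa [fiberAvg_ind] using Submodule.smul_mem _ _ (add_mem (hrow 0) (hrow 1))
  · simpa [← cyl_univ, fiberAvg_ind_cyl] using ind_mem_JLA (𝓐 := 𝓐) (Or.inr rfl)

/-- In the framework FR(1)–FR(5): there is a closed subspace `X` of `JL(𝓑)` such that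
`JL(𝓑)` is the internal direct sum of `JL(𝓐)` and `X`, and both are 1-complemented.
Specifically, `(Pg)(n,0) = (Pg)(n,1) = ½(g(n,0) + g(n,1))` defines a norm-one projection
`P` of `JL(𝓑)` onto `JL(𝓐)`, and `Q = I − P` is a norm-one projection onto `X = ker P`. -/
theorem statement8 (𝓐 : Set (Set S2)) (B0 B1 : Set S2 → Set S2) (hFR : FRhyp 𝓐 B0 B1) :
    ∃ (_ : JLA 𝓐 ≤ JLB 𝓐 B0 B1) (P : ↥(JLB 𝓐 B0 B1) →L[ℝ] ↥(JLB 𝓐 B0 B1)),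
      -- the defining formula for P
      (∀ (g : ↥(JLB 𝓐 B0 B1)) (n : ℕ) (i : Fin 2),
        ((P g : lp (fun _ : S2 => ℝ) ∞) : S2 → ℝ) (n, i) =
          (((g : lp (fun _ : S2 => ℝ) ∞) : S2 → ℝ) (n, 0) +
            ((g : lp (fun _ : S2 => ℝ) ∞) : S2 → ℝ) (n, 1)) / 2) ∧
      -- P is a norm-one projection of JL(𝓑) onto JL(𝓐)
      ‖P‖ = 1 ∧ (∀ g, P (P g) = P g) ∧
      (∀ g, ((P g : lp (fun _ : S2 => ℝ) ∞)) ∈ JLA 𝓐) ∧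
      (∀ g : ↥(JLB 𝓐 B0 B1), ((g : lp (fun _ : S2 => ℝ) ∞)) ∈ JLA 𝓐 → P g = g) ∧
      -- Q = I − P is a norm-one projection onto X = ker P, which is closed
      ‖ContinuousLinearMap.id ℝ ↥(JLB 𝓐 B0 B1) - P‖ = 1 ∧
      Set.range ⇑(ContinuousLinearMap.id ℝ ↥(JLB 𝓐 B0 B1) - P) =
        (LinearMap.ker (P : ↥(JLB 𝓐 B0 B1) →ₗ[ℝ] ↥(JLB 𝓐 B0 B1)) : Set ↥(JLB 𝓐 B0 B1)) ∧
      IsClosed (LinearMap.ker (P : ↥(JLB 𝓐 B0 B1) →ₗ[ℝ] ↥(JLB 𝓐 B0 B1)) : Set ↥(JLB 𝓐 B0 B1)) ∧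
      -- JL(𝓑) is the internal direct sum of JL(𝓐) and X = ker P
      (∀ f : ↥(JLB 𝓐 B0 B1), ∃! q : ↥(JLB 𝓐 B0 B1) × ↥(JLB 𝓐 B0 B1),
        ((q.1 : lp (fun _ : S2 => ℝ) ∞)) ∈ JLA 𝓐 ∧ q.2 ∈ LinearMap.ker (P : ↥(JLB 𝓐 B0 B1) →ₗ[ℝ] ↥(JLB 𝓐 B0 B1)) ∧
          f = q.1 + q.2) := by
  obtain ⟨hcyl, -, -, hsplit, -⟩ := hFR
  have hle : JLA 𝓐 ≤ JLB 𝓐 B0 B1 := JLA_le_JLB hsplit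
  let P : JLB 𝓐 B0 B1 →L[ℝ] JLB 𝓐 B0 B1 :=
    fiberAvg.restrict fun _ hf => hle (fiberAvg_mem_JLA hcyl hsplit hf)
  have hPA : ∀ g, (P g : lp (fun _ : S2 => ℝ) ∞) ∈ JLA 𝓐 := fun g =>
    fiberAvg_mem_JLA hcyl hsplit g.2
  have hPfix : ∀ g : JLB 𝓐 B0 B1, (g : lp (fun _ : S2 => ℝ) ∞) ∈ JLA 𝓐 → P g = g :=
    fun _ hg => Subtype.ext (fiberAvg_eq_self_of_mem_JLA hcyl hg)
  have hPP : ∀ g, P (P g) = P g := fun g => hPfix _ (hPA g)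
  let one : JLB 𝓐 B0 B1 := ⟨ind Set.univ, ind_mem_JLB (Or.inr rfl)⟩
  let e : JLB 𝓐 B0 B1 := ⟨ind {(0, 0)}, ind_mem_JLB (Or.inl (Or.inr (Set.finite_singleton _)))⟩
  refine ⟨hle, P, fun _ _ _ => rfl, ?_, hPP, hPA, hPfix, ?_,
    ContinuousLinearMap.range_id_sub_eq_ker hPP, P.isClosed_ker,
    LinearMap.existsUnique_add_mem_ker hPA hPfix⟩
  · exact ContinuousLinearMap.opNorm_eq_one_of_apply_eq_self
      (fun g => norm_fiberAvg_apply_le (g : lp (fun _ : S2 => ℝ) ∞)) (x := one)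
      (fun h => ind_univ_ne_zero (congrArg Subtype.val h))
      (hPfix one (ind_mem_JLA (Or.inr rfl)))
  · exact ContinuousLinearMap.opNorm_eq_one_of_apply_eq_self
      (fun g => norm_sub_fiberAvg_apply_le (g : lp (fun _ : S2 => ℝ) ∞)) (x := e - P e)
      (fun h => ind_singleton_sub_fiberAvg_ne_zero 0 (congrArg Subtype.val h)) (by simp [hPP])
end

section
/- Let (μ_n)_{n∈ω} be a sequence in ℓ₁(ω×2) with sup_n ‖μ_n‖₁ < ∞. Then for every ε > 0 and every infinite set N ⊆ ω there is an infinite set J ⊆ N such that for every k ∈ J one has Σ_{j∈J, j≠k} ( |μ_k(j,0)| + |μ_k(j,1)| ) < ε. -/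
/-!
Suppose no infinite `J ⊆ N` works for `ε`, so every infinite `J ⊆ N` contains a `k` with
`|μ_k|(J ∖ {k}) ≥ ε`. Splitting an infinite `M ⊆ N` into infinitely many disjoint infinite pieces
and taking such a `k` in each piece gives an infinite `M' ⊆ M` with `|μ_k|(M ∖ M') ≥ ε` for all
`k ∈ M'`. Iterating `T` times yields an infinite `M ⊆ N` with `|μ_k|(N ∖ M) ≥ T ε` for `k ∈ M`,
which contradicts `‖μ_k‖₁ ≤ C` as soon as `T ε > C`.
-/

open Function
open scoped ENNReal

theorem Set.Infinite.exists_pairwise_disjoint_infinite {α : Type*} {s : Set α}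
    (hs : s.Infinite) :
    ∃ P : ℕ → Set α, (∀ i, P i ⊆ s) ∧ (∀ i, (P i).Infinite) ∧ Pairwise (Disjoint on P) := by
  set f := hs.natEmbedding
  have hf : ∀ {i m i' m'}, (f (Nat.pair i m) : α) = f (Nat.pair i' m') → i = i' ∧ m = m' :=
    fun h => Nat.pair_eq_pair.mp (f.injective (Subtype.ext h))
  refine ⟨fun i => Set.range fun m => (f (Nat.pair i m) : α), ?_, ?_, ?_⟩
  · rintro i _ ⟨m, rfl⟩
    exact (f _).2
  · exact fun i => Set.infinite_range_of_injective fun m m' h => (hf h).2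
  · intro i i' hii'
    refine Set.disjoint_left.mpr ?_
    rintro _ ⟨m, rfl⟩ ⟨m', h⟩
    exact hii' (hf h).1.symm

namespace ENNReal

variable {α : Type*} (g : α → α → ℝ≥0∞) {ε : ℝ≥0∞}

theorem exists_infinite_subset_le_tsum_diff {M : Set α} (hM : M.Infinite)
    (hbad : ∀ J ⊆ M, J.Infinite → ∃ k ∈ J, ε ≤ ∑' j : ↥(J \ {k}), g k j) :
    ∃ M' ⊆ M, M'.Infinite ∧ ∀ k ∈ M', ε ≤ ∑' j : ↥(M \ M'), g k j := by
  obtain ⟨P, hPM, hPinf, hPdisj⟩ := hM.exists_pairwise_disjoint_infinite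
  choose k hkP hk using fun i => hbad (P i) (hPM i) (hPinf i)
  have hk_eq {i i' : ℕ} {x : α} (hx : x ∈ P i) (hx' : x ∈ P i') : i = i' := by
    by_contra hne
    exact Set.disjoint_left.mp (hPdisj hne) hx hx'
  refine ⟨Set.range k, ?_, Set.infinite_range_of_injective ?_, ?_⟩
  · rintro _ ⟨i, rfl⟩
    exact hPM i (hkP i)
  · exact fun i i' h => hk_eq (hkP i) (h ▸ hkP i')
  · rintro _ ⟨i, rfl⟩
    refine (hk i).trans (tsum_mono_subtype _ ?_)
    rintro x ⟨hxP, hxk⟩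
    refine ⟨hPM i hxP, ?_⟩
    rintro ⟨i', rfl⟩
    exact hxk (congrArg k (hk_eq (hkP i') hxP))

theorem exists_infinite_subset_mul_le_tsum_diff {N : Set α} (hN : N.Infinite)
    (hbad : ∀ J ⊆ N, J.Infinite → ∃ k ∈ J, ε ≤ ∑' j : ↥(J \ {k}), g k j) (T : ℕ) :
    ∃ M ⊆ N, M.Infinite ∧ ∀ k ∈ M, T * ε ≤ ∑' j : ↥(N \ M), g k j := by
  induction T with
  | zero => exact ⟨N, subset_rfl, hN, fun _ _ => by simp⟩
  | succ T ih =>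
    obtain ⟨M, hMN, hM, hMsum⟩ := ih
    obtain ⟨M', hM'M, hM', hM'sum⟩ :=
      exists_infinite_subset_le_tsum_diff g hM fun J hJ => hbad J (hJ.trans hMN)
    refine ⟨M', hM'M.trans hMN, hM', fun k hk => ?_⟩
    calc ((T + 1 : ℕ) : ℝ≥0∞) * ε = T * ε + ε := by push_cast; ring
      _ ≤ ∑' j : ↥(N \ M), g k j + ∑' j : ↥(M \ M'), g k j :=
        add_le_add (hMsum k (hM'M hk)) (hM'sum k hk)
      _ = ∑' j : ↥(N \ M'), g k j := by
        rw [← Set.sdiff_union_sdiff_cancel hMN hM'M, Summable.tsum_union_disjoint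
          (Set.disjoint_sdiff_left.mono_right Set.sdiff_subset) ENNReal.summable ENNReal.summable]

theorem exists_infinite_subset_tsum_diff_singleton_lt {C : ℝ≥0∞} (hC : C ≠ ∞)
    (hg : ∀ k, ∑' j, g k j ≤ C) (hε : ε ≠ 0) {N : Set α} (hN : N.Infinite) :
    ∃ J ⊆ N, J.Infinite ∧ ∀ k ∈ J, ∑' j : ↥(J \ {k}), g k j < ε := by
  by_contra! hbad
  obtain ⟨T, hT⟩ := ENNReal.exists_nat_mul_gt hε hC
  obtain ⟨M, -, hM, hMsum⟩ := exists_infinite_subset_mul_le_tsum_diff g hN hbad T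
  obtain ⟨k, hk⟩ := hM.nonempty
  refine hT.not_ge ?_
  calc (T : ℝ≥0∞) * ε ≤ ∑' j : ↥(N \ M), g k j := hMsum k hk
    _ ≤ ∑' j, g k j := tsum_comp_le_tsum_of_injective Subtype.val_injective (g k)
    _ ≤ C := hg k

end ENNReal

theorem exists_infinite_subset_tsum_diff_singleton_lt_of_nonneg {α : Type*}
    (f : α → α → ℝ) (hf₀ : ∀ k j, 0 ≤ f k j) (hf : ∀ k, Summable (f k)) {C : ℝ}
    (hC : ∀ k, ∑' j, f k j ≤ C) {ε : ℝ} (hε : 0 < ε) {N : Set α} (hN : N.Infinite) :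
    ∃ J ⊆ N, J.Infinite ∧ ∀ k ∈ J, ∑' j : ↥(J \ {k}), f k j < ε := by
  have hofReal_tsum (k : α) (s : Set α) :
      ENNReal.ofReal (∑' j : s, f k j) = ∑' j : s, ENNReal.ofReal (f k j) :=
    ENNReal.ofReal_tsum_of_nonneg (fun _ => hf₀ k _) ((hf k).subtype s)
  have hg (k : α) : ∑' j, ENNReal.ofReal (f k j) ≤ ENNReal.ofReal C := by
    rw [← ENNReal.ofReal_tsum_of_nonneg (hf₀ k) (hf k)]
    exact ENNReal.ofReal_le_ofReal (hC k)
  obtain ⟨J, hJN, hJ, hJsum⟩ := ENNReal.exists_infinite_subset_tsum_diff_singleton_lt _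
    ENNReal.ofReal_ne_top hg (ENNReal.ofReal_pos.mpr hε).ne' hN
  refine ⟨J, hJN, hJ, fun k hk => ?_⟩
  rw [← ENNReal.ofReal_lt_ofReal_iff hε, hofReal_tsum]
  exact hJsum k hk

/-- Rosenthal's lemma: if `(μ_n)` is a uniformly bounded sequence in `ℓ₁(ω × 2)`, then
for every `ε > 0` and every infinite `N ⊆ ω` there is an infinite `J ⊆ N` such that
`|μ_k|(⋃_{j ∈ J∖{k}} c_j) < ε` for every `k ∈ J`. -/
theorem statement10 (μ : ℕ → S2 → ℝ) (hsum : ∀ n, Summable fun s => |μ n s|)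
    (C : ℝ) (hC : ∀ n, (∑' s, |μ n s|) ≤ C) :
    ∀ ε > (0 : ℝ), ∀ N : Set ℕ, N.Infinite →
      ∃ J : Set ℕ, J ⊆ N ∧ J.Infinite ∧
        ∀ k ∈ J, (∑' j : ↥(J \ {k}), (|μ k ((j : ℕ), 0)| + |μ k ((j : ℕ), 1)|)) < ε := by
  intro ε hε N hN
  have hfiber (n j : ℕ) : ∑' i : Fin 2, |μ n (j, i)| = |μ n (j, 0)| + |μ n (j, 1)| := by
    rw [tsum_fintype, Fin.sum_univ_two]
  have hrow_summable (n : ℕ) : Summable fun j : ℕ => |μ n (j, 0)| + |μ n (j, 1)| := by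
    simpa only [hfiber] using (hsum n).prod
  have hrow_tsum (n : ℕ) : ∑' j : ℕ, (|μ n (j, 0)| + |μ n (j, 1)|) ≤ C := by
    simpa only [(hsum n).tsum_prod, hfiber] using hC n
  exact exists_infinite_subset_tsum_diff_singleton_lt_of_nonneg _ (fun _ _ => by positivity)
    hrow_summable hrow_tsum hε hN
end

section
/- Let 𝔅 be an algebra of subsets of ω containing all finite sets, with |𝔅| < 𝔠 (the cardinality of the continuum). Then for every infinite set M ⊆ M₁(P(ω)), the collection of subsets M′ ⊆ M for which the pair (M′, M∖M′) is 𝔅-separated has cardinality strictly less than 𝔠. -/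
/-- `𝔄` is an algebra of subsets of `S`: it contains `S`, and is closed under
complements, finite unions and finite intersections. -/
def IsSetAlgebraOn {S : Type*} (𝔄 : Set (Set S)) : Prop :=
  Set.univ ∈ 𝔄 ∧ (∀ A ∈ 𝔄, Aᶜ ∈ 𝔄) ∧ (∀ A ∈ 𝔄, ∀ B ∈ 𝔄, A ∪ B ∈ 𝔄) ∧
    (∀ A ∈ 𝔄, ∀ B ∈ 𝔄, A ∩ B ∈ 𝔄)

/-- `m` is finitely additive on the algebra `𝔄` of subsets of `S`. -/
def FinAddOn {S : Type*} (𝔄 : Set (Set S)) (m : Set S → ℝ) : Prop :=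
  ∀ A ∈ 𝔄, ∀ B ∈ 𝔄, Disjoint A B → m (A ∪ B) = m A + m B

/-- `m` has variation norm `‖m‖ = |m|(S) ≤ 1` on the algebra `𝔄`. -/
def VarLeOne {S : Type*} (𝔄 : Set (Set S)) (m : Set S → ℝ) : Prop :=
  ∀ B ∈ 𝔄, |m B| + |m Bᶜ| ≤ 1

/-- `M₁(P(S))`: the finitely additive measures of norm at most `1` on the full power
set algebra of `S`. -/
def M1full (S : Type*) : Set (Set S → ℝ) :=
  {m | FinAddOn (Set.univ : Set (Set S)) m ∧ VarLeOne (Set.univ : Set (Set S)) m}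

/-- The pair `(M, M')` is `𝔅`-separated: there are `ε > 0` and finitely many sets
`B₁, …, B_n ∈ 𝔅` such that for every `(μ, μ') ∈ M × M'` there is `i ≤ n` with
`|μ(B_i) − μ'(B_i)| ≥ ε`. -/
def SeparatedBy {S : Type*} (𝔅 : Set (Set S)) (M M' : Set (Set S → ℝ)) : Prop :=
  ∃ ε > (0 : ℝ), ∃ n : ℕ, 0 < n ∧ ∃ B : Fin n → Set S, (∀ i, B i ∈ 𝔅) ∧
    ∀ m ∈ M, ∀ m' ∈ M', ∃ i, ε ≤ |m (B i) - m' (B i)|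

/-- Per-witness finiteness: for a fixed `q > 0` and tuple `B`, there are only finitely
many `M' ⊆ M` that are `q`-separated from `M \ M'` by `B`. -/
lemma sep_witness_finite (M : Set (Set ℕ → ℝ)) (hM : M ⊆ M1full ℕ)
    (q : ℝ) (hq : 0 < q) (n : ℕ) (B : Fin n → Set ℕ) :
    {M' : Set (Set ℕ → ℝ) | M' ⊆ M ∧
      ∀ m ∈ M', ∀ m' ∈ M \ M', ∃ i, q ≤ |m (B i) - m' (B i)|}.Finite := by
  classical
  set S : Set (Set (Set ℕ → ℝ)) := {M' | M' ⊆ M ∧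
      ∀ m ∈ M', ∀ m' ∈ M \ M', ∃ i, q ≤ |m (B i) - m' (B i)|} with hS
  set G : (Set ℕ → ℝ) → (Fin n → ℤ) := fun m i => ⌊m (B i) / q⌋ with hG
  -- values of G on M land in a fixed finite box
  have hbound : ∀ m ∈ M, ∀ i : Fin n, G m i ∈ Set.Icc (⌊(-1 : ℝ) / q⌋) ⌊(1 : ℝ) / q⌋ := by
    intro m hm i
    have h2 := (hM hm).2 (B i) (Set.mem_univ _)
    have h3 : |m (B i)| ≤ 1 := by
      have := abs_nonneg (m (B i)ᶜ); linarith
    rw [abs_le] at h3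
    constructor
    · exact Int.floor_le_floor (div_le_div_of_nonneg_right h3.1 hq.le)
    · exact Int.floor_le_floor (div_le_div_of_nonneg_right h3.2 hq.le)
  -- points in the same cell are < q apart
  have hclose : ∀ x y : ℝ, ⌊x / q⌋ = ⌊y / q⌋ → |x - y| < q := by
    intro x y hxy
    have h1 := Int.floor_le (x / q)
    have h2 := Int.lt_floor_add_one (x / q)
    have h3 := Int.floor_le (y / q)
    have h4 := Int.lt_floor_add_one (y / q)
    rw [hxy] at h1 h2
    have h5 : |x / q - y / q| < 1 := by rw [abs_sub_lt_iff]; constructor <;> linarith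
    have h6 : x - y = (x / q - y / q) * q := by field_simp
    rw [h6, abs_mul, abs_of_pos hq]
    calc |x / q - y / q| * q < 1 * q := by
          exact mul_lt_mul_of_pos_right h5 hq
      _ = q := one_mul q
  -- members of S are determined by their G-image
  have key : ∀ M1 M2 : Set (Set ℕ → ℝ), M1 ∈ S → M2 ∈ S → G '' M1 = G '' M2 → M1 ⊆ M2 := by
    intro M1 M2 h1 h2 himg m hm
    by_contra hnm
    have hGm : G m ∈ G '' M2 := himg ▸ Set.mem_image_of_mem G hm
    obtain ⟨m2, hm2, hGm2⟩ := hGm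
    obtain ⟨i, hi⟩ := h2.2 m2 hm2 m ⟨h1.1 hm, hnm⟩
    have hfloor : ⌊m2 (B i) / q⌋ = ⌊m (B i) / q⌋ := congrFun hGm2 i
    have := hclose (m2 (B i)) (m (B i)) hfloor
    linarith
  have hinj : Set.InjOn (fun M' => G '' M') S := by
    intro M1 h1 M2 h2 himg
    exact Set.Subset.antisymm (key M1 M2 h1 h2 himg) (key M2 M1 h2 h1 himg.symm)
  have himgfin : ((fun M' => G '' M') '' S).Finite := by
    have hbox : (Set.pi Set.univ fun _ : Fin n =>
        Set.Icc (⌊(-1 : ℝ) / q⌋) ⌊(1 : ℝ) / q⌋).Finite :=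
      Set.Finite.pi fun _ => Set.finite_Icc _ _
    apply hbox.finite_subsets.subset
    rintro _ ⟨M', hM', rfl⟩
    rintro f ⟨m, hm, rfl⟩
    rw [Set.mem_univ_pi]
    intro i
    exact hbound m (hM'.1 hm) i
  exact Set.Finite.of_finite_image himgfin hinj

open Cardinal in
/-- If `𝔅` is an algebra of subsets of `ω` containing all finite sets with `|𝔅| < 𝔠`,
then for every infinite `M ⊆ M₁(P(ω))` there are fewer than `𝔠` many subsets
`M' ⊆ M` for which the pair `(M', M∖M')` is `𝔅`-separated. -/
theorem statement12 (𝔅 : Set (Set ℕ)) (h𝔅 : IsSetAlgebraOn 𝔅)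
    (hfin : ∀ F : Set ℕ, F.Finite → F ∈ 𝔅)
    (hcard : #↥𝔅 < continuum)
    (M : Set (Set ℕ → ℝ)) (hM : M ⊆ M1full ℕ) (hMinf : M.Infinite) :
    #{M' : Set (Set ℕ → ℝ) // M' ⊆ M ∧ SeparatedBy 𝔅 M' (M \ M')} < continuum := by
  classical
  set κ : Cardinal := max (#↥𝔅) ℵ₀ with hκ
  have hκinf : ℵ₀ ≤ κ := le_max_right _ _
  have hκlt : κ < continuum := max_lt hcard Cardinal.aleph0_lt_continuum
  -- index type of witnesses
  set I := ℚ × Σ n : ℕ, (Fin n → ↥𝔅) with hI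
  set S : I → Set (Set (Set ℕ → ℝ)) := fun p =>
    {M' | M' ⊆ M ∧ 0 < (p.1 : ℝ) ∧
      ∀ m ∈ M', ∀ m' ∈ M \ M', ∃ i, (p.1 : ℝ) ≤ |m ((p.2.2 i : Set ℕ)) - m' (p.2.2 i)|}
    with hSdef
  -- the collection is contained in the union of the S p
  have hsub : {M' : Set (Set ℕ → ℝ) | M' ⊆ M ∧ SeparatedBy 𝔅 M' (M \ M')} ⊆ ⋃ p, S p := by
    rintro M' ⟨hM'M, ε, hε, n, hn, B, hB, hsep⟩
    obtain ⟨qr, hqr0, hqrε⟩ := exists_rat_btwn hε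
    refine Set.mem_iUnion.mpr ⟨⟨qr, n, fun i => ⟨B i, hB i⟩⟩, hM'M, hqr0, ?_⟩
    intro m hm m' hm'
    obtain ⟨i, hi⟩ := hsep m hm m' hm'
    exact ⟨i, le_trans hqrε.le hi⟩
  -- each S p is finite
  have hfinS : ∀ p : I, (S p).Finite := by
    intro p
    by_cases hq : 0 < (p.1 : ℝ)
    · apply (sep_witness_finite M hM (p.1 : ℝ) hq p.2.1 (fun i => (p.2.2 i : Set ℕ))).subset
      rintro M' ⟨h1, _, h3⟩
      exact ⟨h1, h3⟩
    · have : S p = ∅ := by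
        ext M'; simp only [hSdef, Set.mem_setOf_eq, Set.mem_empty_iff_false, iff_false]
        rintro ⟨_, h2, _⟩; exact hq h2
      rw [this]; exact Set.finite_empty
  -- cardinality computation
  have h1 : #{M' : Set (Set ℕ → ℝ) // M' ⊆ M ∧ SeparatedBy 𝔅 M' (M \ M')}
      ≤ #(⋃ p, S p) := Cardinal.mk_le_mk_of_subset hsub
  have h2 : #(⋃ p, S p) ≤ Cardinal.sum fun p => #(S p) := Cardinal.mk_iUnion_le_sum_mk
  have h3 : (Cardinal.sum fun p => #(S p)) ≤ Cardinal.sum fun _ : I => ℵ₀ :=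
    Cardinal.sum_le_sum _ _ fun p => ((hfinS p).lt_aleph0).le
  have h4 : (Cardinal.sum fun _ : I => ℵ₀) = #I * ℵ₀ := Cardinal.sum_const' I ℵ₀
  -- #I ≤ κ
  have hIle : #I ≤ κ := by
    have hsig : #(Σ n : ℕ, (Fin n → ↥𝔅)) ≤ κ := by
      have : #(Σ n : ℕ, (Fin n → ↥𝔅)) = Cardinal.sum fun n : ℕ => #(Fin n → ↥𝔅) :=
        Cardinal.mk_sigma _
      rw [this]
      calc Cardinal.sum (fun n : ℕ => #(Fin n → ↥𝔅))
          ≤ Cardinal.sum (fun _ : ℕ => κ) := by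
            apply Cardinal.sum_le_sum
            intro n
            have : #(Fin n → ↥𝔅) = #↥𝔅 ^ (n : Cardinal) := by
              rw [← Cardinal.power_def, Cardinal.mk_fin]
            rw [this]
            calc #↥𝔅 ^ (n : Cardinal) ≤ κ ^ (n : Cardinal) :=
                  Cardinal.power_le_power_right (le_max_left _ _)
              _ ≤ κ := Cardinal.pow_le hκinf (Cardinal.nat_lt_aleph0 n)
        _ = #ℕ * κ := Cardinal.sum_const' ℕ κ
        _ = ℵ₀ * κ := by rw [Cardinal.mk_nat]
        _ ≤ κ * κ := mul_le_mul_left hκinf κ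
        _ = κ := Cardinal.mul_eq_self hκinf
    calc #I = #ℚ * #(Σ n : ℕ, (Fin n → ↥𝔅)) := by
          rw [hI, Cardinal.mk_prod, Cardinal.lift_id, Cardinal.lift_id]
      _ ≤ ℵ₀ * κ := by
          apply mul_le_mul'
          · exact le_of_eq (Cardinal.mk_denumerable ℚ)
          · exact hsig
      _ ≤ κ * κ := mul_le_mul_left hκinf κ
      _ = κ := Cardinal.mul_eq_self hκinf
  calc #{M' : Set (Set ℕ → ℝ) // M' ⊆ M ∧ SeparatedBy 𝔅 M' (M \ M')}
      ≤ #I * ℵ₀ := by rw [← h4]; exact le_trans h1 (le_trans h2 h3)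
    _ ≤ κ * κ := mul_le_mul' hIle hκinf
    _ = κ := Cardinal.mul_eq_self hκinf
    _ < continuum := hκlt
end

section
/- Let 𝔅 be an algebra of subsets of ω containing all finite sets, and let M, M′ ⊆ M₁(P(ω)). Suppose there are n ∈ ω, ε > 0, k ∈ ω with k > 12n/ε, almost disjoint sets Z₁, …, Z_k ⊆ ω, and sets A₁, B₁, …, A_n, B_n ∈ 𝔅 such that for every j with 1 ≤ j ≤ k and every (μ, μ′) ∈ M × M′ there is i ≤ n with |μ(Y_{j,i}) − μ′(Y_{j,i})| ≥ ε, where Y_{j,i} = (A_i ∩ Z_j) ∪ (B_i ∩ Z_j^c). Then the pair (M, M′) is 𝔅-separated. -/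
/-!
Write `ν = μ - μ'`. As `Y_{j,i}` agrees with `B_i` off `Z_j`,
`ν(Y_{j,i}) = ν(B_i) + ν((A_i \ B_i) ∩ Z_j) - ν((B_i \ A_i) ∩ Z_j)`. The sets
`W_j = Z_j \ ⋃_{l<j} Z_l` (`disjointed Z j`) are pairwise disjoint and differ from `Z_j` by
finite sets. If `|ν| < ε/4` on every `B_i` and on the finitely many finite sets
`(A_i \ B_i) ∩ (Z_j \ W_j)`, `(B_i \ A_i) ∩ (Z_j \ W_j)`, then for each `j` the disjoint sets
`(A_i \ B_i) ∩ W_j` and `(B_i \ A_i) ∩ W_j` carry `|ν|`-mass more than `ε/4`. All these `2k` sets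
are pairwise disjoint and `‖ν‖ ≤ 2`, so `kε/4 < 2`, contradicting `kε > 12n ≥ 12`.
-/

open Set Function MeasureTheory

variable {S : Type*}

namespace FinAddOn

variable {m m' : Set S → ℝ}

theorem map_union (hm : FinAddOn univ m) {X Y : Set S} (h : Disjoint X Y) :
    m (X ∪ Y) = m X + m Y :=
  hm X trivial Y trivial h

theorem map_empty (hm : FinAddOn univ m) : m ∅ = 0 := by
  simpa using hm.map_union (disjoint_empty (∅ : Set S))

theorem sub {𝔄 : Set (Set S)} (hm : FinAddOn 𝔄 m) (hm' : FinAddOn 𝔄 m') :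
    FinAddOn 𝔄 (m - m') := fun X hX Y hY h => by
  simp only [Pi.sub_apply, hm X hX Y hY h, hm' X hX Y hY h]
  ring

theorem map_inter_add_diff (hm : FinAddOn univ m) (X Y : Set S) :
    m (X ∩ Y) + m (X \ Y) = m X := by
  rw [← hm.map_union disjoint_sdiff_inter.symm, inter_union_sdiff]

theorem map_inter_union_inter_compl (hm : FinAddOn univ m) (A B Z : Set S) :
    m (A ∩ Z ∪ B ∩ Zᶜ) = m B + m ((A \ B) ∩ Z) - m ((B \ A) ∩ Z) := by
  have hY := hm.map_inter_add_diff (A ∩ Z ∪ B ∩ Zᶜ) Z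
  have hB := hm.map_inter_add_diff B Z
  have hAZ := hm.map_inter_add_diff (A ∩ Z) B
  have hBZ := hm.map_inter_add_diff (B ∩ Z) A
  rw [show (A ∩ Z ∪ B ∩ Zᶜ) ∩ Z = A ∩ Z by ext; simp; tauto,
    show (A ∩ Z ∪ B ∩ Zᶜ) \ Z = B \ Z by ext; simp; tauto] at hY
  rw [show (A ∩ Z) \ B = (A \ B) ∩ Z by ext; simp; tauto] at hAZ
  rw [show (B ∩ Z) \ A = (B \ A) ∩ Z by ext; simp; tauto,
    show B ∩ Z ∩ A = A ∩ Z ∩ B by ext; simp; tauto] at hBZ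
  linarith

theorem lt_abs_add_abs_of_le_abs (hm : FinAddOn univ m) {A B Z W : Set S} (hW : W ⊆ Z) {ε : ℝ}
    (h : ε ≤ |m (A ∩ Z ∪ B ∩ Zᶜ)|) (hB : |m B| < ε / 4)
    (hAB : |m ((A \ B) ∩ (Z \ W))| < ε / 4) (hBA : |m ((B \ A) ∩ (Z \ W))| < ε / 4) :
    ε / 4 < |m ((A \ B) ∩ W)| + |m ((B \ A) ∩ W)| := by
  have hABW := hm.map_inter_add_diff ((A \ B) ∩ Z) W
  have hBAW := hm.map_inter_add_diff ((B \ A) ∩ Z) W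
  rw [inter_assoc, inter_eq_right.2 hW, inter_sdiff_assoc] at hABW hBAW
  rw [hm.map_inter_union_inter_compl, ← hABW, ← hBAW] at h
  rcases le_abs'.1 h with h | h <;>
    linarith [abs_lt.1 hB, abs_lt.1 hAB, abs_lt.1 hBA, le_abs_self (m ((A \ B) ∩ W)),
      neg_le_abs (m ((A \ B) ∩ W)), le_abs_self (m ((B \ A) ∩ W)), neg_le_abs (m ((B \ A) ∩ W))]

theorem map_biUnion (hm : FinAddOn univ m) {ι : Type*} {s : Finset ι} {T : ι → Set S}
    (hT : (s : Set ι).PairwiseDisjoint T) : m (⋃ i ∈ s, T i) = ∑ i ∈ s, m (T i) :=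
  addContent_biUnion (C := univ) (m := IsSetRing.addContent_of_union m
      ⟨trivial, fun _ _ _ _ => trivial, fun _ _ _ _ => trivial⟩ hm.map_empty
      fun _ _ h => hm.map_union h)
    (fun _ _ => trivial) hT trivial

end FinAddOn

theorem finite_sdiff_disjointed {ι : Type*} [Preorder ι] [LocallyFiniteOrderBot ι]
    {Z : ι → Set S} (hZ : Pairwise fun j l => (Z j ∩ Z l).Finite) (j : ι) :
    (Z j \ disjointed Z j).Finite := by
  rw [disjointed_apply, sdiff_sdiff_right_self, Finset.sup_set_eq_biUnion]
  simp only [inter_iUnion₂]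
  exact (Finset.finite_toSet _).biUnion fun l hl => hZ (Finset.mem_Iio.1 hl).ne'

theorem pairwise_disjoint_sumElim_inter {κ : Type*} {W P Q : κ → Set S}
    (hW : Pairwise (Disjoint on W)) (hPQ : ∀ j, Disjoint (P j) (Q j)) :
    Pairwise (Disjoint on Sum.elim (fun j => P j ∩ W j) (fun j => Q j ∩ W j)) := by
  have hcross : ∀ j l, Disjoint (P j ∩ W j) (Q l ∩ W l) := fun j l => by
    rcases eq_or_ne j l with rfl | h
    · exact (hPQ j).mono inter_subset_left inter_subset_left
    · exact (hW h).mono inter_subset_right inter_subset_right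
  rintro (j | j) (l | l) h
  · exact (hW fun e => h (congrArg _ e)).mono inter_subset_right inter_subset_right
  · exact hcross j l
  · exact (hcross l j).symm
  · exact (hW fun e => h (congrArg _ e)).mono inter_subset_right inter_subset_right

namespace M1full

variable {m m' : Set S → ℝ}

theorem abs_add_abs_le_one (hm : m ∈ M1full S) {X Y : Set S} (h : Disjoint X Y) :
    |m X| + |m Y| ≤ 1 := by
  obtain ⟨hadd, hvar⟩ := hm
  -- Split `S` into `X`, `Y` and `R`, and test the variation bound on `X`, `Y` and `X ∪ Y`.
  set R := (X ∪ Y)ᶜ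
  have hX : |m X| + |m Y + m R| ≤ 1 := by
    rw [← hadd.map_union (disjoint_compl_right.mono_left subset_union_right)]
    convert hvar X trivial using 4
    ext x; have := @disjoint_left.1 h x; simp; tauto
  have hY : |m Y| + |m X + m R| ≤ 1 := by
    rw [← hadd.map_union (disjoint_compl_right.mono_left subset_union_left)]
    convert hvar Y trivial using 4
    ext x; have := @disjoint_left.1 h x; simp; tauto
  have hXY : |m X + m Y| ≤ 1 := by
    have := hvar (X ∪ Y) trivial
    rw [hadd.map_union h] at this
    linarith [abs_nonneg (m R)]
  rcases abs_cases (m X) with ⟨hx, _⟩ | ⟨hx, _⟩ <;>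
    rcases abs_cases (m Y) with ⟨hy, _⟩ | ⟨hy, _⟩ <;> rcases le_total 0 (m R) with hr | hr <;>
    rw [hx, hy] <;> rw [hx] at hX <;> rw [hy] at hY <;>
    linarith [le_abs_self (m Y + m R), neg_abs_le (m Y + m R), le_abs_self (m X + m R),
      neg_abs_le (m X + m R), le_abs_self (m X + m Y), neg_abs_le (m X + m Y)]

theorem sum_abs_le_one (hm : m ∈ M1full S) {ι : Type*} [Fintype ι] {T : ι → Set S}
    (hT : Pairwise (Disjoint on T)) : ∑ i, |m (T i)| ≤ 1 := by
  classical
  set pos := Finset.univ.filter fun i => 0 ≤ m (T i)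
  set neg := Finset.univ.filter fun i => ¬0 ≤ m (T i)
  have hunion : ∀ s : Finset ι, m (⋃ i ∈ s, T i) = ∑ i ∈ s, m (T i) :=
    fun s => hm.1.map_biUnion (hT.set_pairwise _)
  have hdisj : Disjoint (⋃ i ∈ pos, T i) (⋃ i ∈ neg, T i) := by
    simp only [disjoint_iUnion_left, disjoint_iUnion_right]
    intro i hi j hj
    refine hT fun hij => ?_
    simp only [pos, neg, Finset.mem_filter] at hi hj
    exact hi.2 (hij ▸ hj.2)
  calc ∑ i, |m (T i)| = ∑ i ∈ pos, m (T i) - ∑ i ∈ neg, m (T i) := by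
        rw [← Finset.sum_filter_add_sum_filter_not _ fun i => 0 ≤ m (T i), sub_eq_add_neg,
          ← Finset.sum_neg_distrib]
        congr 1 <;> refine Finset.sum_congr rfl fun i hi => ?_
        · exact abs_of_nonneg (Finset.mem_filter.1 hi).2
        · exact abs_of_neg (not_le.1 (Finset.mem_filter.1 hi).2)
    _ ≤ |m (⋃ i ∈ pos, T i)| + |m (⋃ i ∈ neg, T i)| := by
        rw [hunion, hunion]
        linarith [le_abs_self (∑ i ∈ pos, m (T i)), neg_le_abs (∑ i ∈ neg, m (T i))]
    _ ≤ 1 := abs_add_abs_le_one hm hdisj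

theorem sum_abs_sub_le_two (hm : m ∈ M1full S) (hm' : m' ∈ M1full S) {ι : Type*} [Fintype ι]
    {T : ι → Set S} (hT : Pairwise (Disjoint on T)) : ∑ i, |m (T i) - m' (T i)| ≤ 2 :=
  calc ∑ i, |m (T i) - m' (T i)| ≤ ∑ i, (|m (T i)| + |m' (T i)|) :=
        Finset.sum_le_sum fun i _ => abs_sub _ _
    _ ≤ 2 := by
        rw [Finset.sum_add_distrib]
        linarith [sum_abs_le_one hm hT, sum_abs_le_one hm' hT]

theorem sum_abs_sub_inter_add_abs_sub_inter_le_two (hm : m ∈ M1full S) (hm' : m' ∈ M1full S)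
    {κ : Type*} [Fintype κ] {W P Q : κ → Set S} (hW : Pairwise (Disjoint on W))
    (hPQ : ∀ j, Disjoint (P j) (Q j)) :
    ∑ j, (|m (P j ∩ W j) - m' (P j ∩ W j)| + |m (Q j ∩ W j) - m' (Q j ∩ W j)|) ≤ 2 := by
  have := sum_abs_sub_le_two hm hm' (pairwise_disjoint_sumElim_inter hW hPQ)
  simpa only [Fintype.sum_sum_type, Sum.elim_inl, Sum.elim_inr, ← Finset.sum_add_distrib]
    using this

end M1full

theorem SeparatedBy.of_fintype {𝔅 : Set (Set S)} (h𝔅 : 𝔅.Nonempty) {M M' : Set (Set S → ℝ)}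
    {ι : Type*} [Fintype ι] (C : ι → Set S) (hC : ∀ i, C i ∈ 𝔅) {ε : ℝ} (hε : 0 < ε)
    (hsep : ∀ m ∈ M, ∀ m' ∈ M', ∃ i, ε ≤ |m (C i) - m' (C i)|) : SeparatedBy 𝔅 M M' := by
  obtain ⟨B₀, hB₀⟩ := h𝔅
  -- Padding with `B₀` makes the index type nonempty even when `ι` is empty.
  let e := Fintype.equivFin (Option ι)
  refine ⟨ε, hε, Fintype.card (Option ι), Fintype.card_pos, fun i => (e.symm i).elim B₀ C,
    fun i => ?_, fun m hm m' hm' => ?_⟩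
  · show (e.symm i).elim B₀ C ∈ 𝔅
    cases e.symm i with
    | none => exact hB₀
    | some i => exact hC i
  · obtain ⟨i, hi⟩ := hsep m hm m' hm'
    exact ⟨e (some i), by simpa using hi⟩

theorem statement13_general (𝔅 : Set (Set ℕ))
    (hfin : ∀ F : Set ℕ, F.Finite → F ∈ 𝔅)
    (M M' : Set (Set ℕ → ℝ)) (hM : M ⊆ M1full ℕ) (hM' : M' ⊆ M1full ℕ)
    (n : ℕ) (ε : ℝ) (hε : 0 < ε) (k : ℕ) (hk : 12 * (n : ℝ) / ε < (k : ℝ))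
    (Z : Fin k → Set ℕ) (hZ : ∀ j l, j ≠ l → (Z j ∩ Z l).Finite)
    (A B : Fin n → Set ℕ) (hB : ∀ i, B i ∈ 𝔅)
    (hsep : ∀ j : Fin k, ∀ m ∈ M, ∀ m' ∈ M', ∃ i : Fin n,
      ε ≤ |m ((A i ∩ Z j) ∪ (B i ∩ (Z j)ᶜ)) - m' ((A i ∩ Z j) ∪ (B i ∩ (Z j)ᶜ))|) :
    SeparatedBy 𝔅 M M' := by
  let D : Fin k × Fin n → Set ℕ := fun p => (A p.2 \ B p.2) ∩ (Z p.1 \ disjointed Z p.1)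
  let E : Fin k × Fin n → Set ℕ := fun p => (B p.2 \ A p.2) ∩ (Z p.1 \ disjointed Z p.1)
  have hfinite := finite_sdiff_disjointed hZ
  refine SeparatedBy.of_fintype ⟨∅, hfin ∅ finite_empty⟩ (Sum.elim B (Sum.elim D E))
    (fun c => ?_) (div_pos hε four_pos) fun m hm m' hm' => ?_
  · rcases c with i | ⟨j, i⟩ | ⟨j, i⟩
    exacts [hB i, hfin _ ((hfinite j).subset inter_subset_right),
      hfin _ ((hfinite j).subset inter_subset_right)]
  by_contra! hsmall
  choose I hI using fun j => hsep j m hm m' hm'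
  have hlower (j : Fin k) : ε / 4 <
      |m ((A (I j) \ B (I j)) ∩ disjointed Z j) - m' ((A (I j) \ B (I j)) ∩ disjointed Z j)| +
        |m ((B (I j) \ A (I j)) ∩ disjointed Z j) - m' ((B (I j) \ A (I j)) ∩ disjointed Z j)| :=
    ((hM hm).1.sub (hM' hm').1).lt_abs_add_abs_of_le_abs (disjointed_subset Z j) (hI j)
      (hsmall (.inl (I j))) (hsmall (.inr (.inl (j, I j)))) (hsmall (.inr (.inr (j, I j))))
  have hupper := M1full.sum_abs_sub_inter_add_abs_sub_inter_le_two (hM hm) (hM' hm')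
    (P := fun j => A (I j) \ B (I j)) (Q := fun j => B (I j) \ A (I j))
    (disjoint_disjointed Z) fun _ => disjoint_sdiff_sdiff
  have hk0 : 0 < k := by exact_mod_cast (div_nonneg (by positivity) hε.le).trans_lt hk
  have hn : (1 : ℝ) ≤ n := by exact_mod_cast (I ⟨0, hk0⟩).pos
  have hsum := Finset.sum_lt_sum_of_nonempty ⟨⟨0, hk0⟩, Finset.mem_univ _⟩ fun j _ => hlower j
  rw [Finset.sum_const, Finset.card_univ, Fintype.card_fin, nsmul_eq_mul] at hsum
  rw [div_lt_iff₀ hε] at hk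
  linarith

/-- Haydon-type separation lemma: suppose `𝔅` contains all finite sets, and there are
`n ∈ ω`, `ε > 0`, `k > 12n/ε`, almost disjoint sets `Z₁, …, Z_k ⊆ ω` and sets
`A₁, B₁, …, A_n, B_n ∈ 𝔅` such that for each `j ≤ k` the pair `(M, M')` is separated
(with constant `ε`) by the sets `Y_{j,i} = (A_i ∩ Z_j) ∪ (B_i ∩ Z_jᶜ)`, `i ≤ n`.
Then `(M, M')` is `𝔅`-separated. -/
theorem statement13 (𝔅 : Set (Set ℕ)) (h𝔅 : IsSetAlgebraOn 𝔅)
    (hfin : ∀ F : Set ℕ, F.Finite → F ∈ 𝔅)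
    (M M' : Set (Set ℕ → ℝ)) (hM : M ⊆ M1full ℕ) (hM' : M' ⊆ M1full ℕ)
    (n : ℕ) (ε : ℝ) (hε : 0 < ε) (k : ℕ) (hk : 12 * (n : ℝ) / ε < (k : ℝ))
    (Z : Fin k → Set ℕ) (hZ : ∀ j l, j ≠ l → (Z j ∩ Z l).Finite)
    (A B : Fin n → Set ℕ) (hA : ∀ i, A i ∈ 𝔅) (hB : ∀ i, B i ∈ 𝔅)
    (hsep : ∀ j : Fin k, ∀ m ∈ M, ∀ m' ∈ M', ∃ i : Fin n,
      ε ≤ |m ((A i ∩ Z j) ∪ (B i ∩ (Z j)ᶜ)) - m' ((A i ∩ Z j) ∪ (B i ∩ (Z j)ᶜ))|) :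
    SeparatedBy 𝔅 M M' :=
  statement13_general 𝔅 hfin M M' hM hM' n ε hε k hk Z hZ A B hB hsep
end

section
/- Fix an ordinal ξ < 𝔠. Suppose given: (i) a family {𝔅_α : α < ξ} of algebras of subsets of ω, each containing all finite subsets of ω and of cardinality at most max(|ξ|, ℵ₀); and (ii) a family {(M_α, M′_α) : α < ξ} of pairs of subsets of M₁(P(ω)) such that for every α < ξ the pair (M_α, M′_α) is not 𝔅_α-separated. Then for every almost disjoint family 𝒵 of infinite subsets of ω with |𝒵| = 𝔠 there exists Z ∈ 𝒵 such that for every α < ξ the pair (M_α, M′_α) is not 𝔅_α[Z]-separated. -/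
/-!
Suppose every `Z ∈ 𝒵` makes some pair `𝔅_α[Z]`-separated. Every member of `𝔅_α[Z]` has the form
`B' ∩ Z ∪ B'' \ Z` with `B', B'' ∈ 𝔅_α`, so a separation is coded by `α`, a margin `1 / (k + 1)` and
finitely many pairs from `𝔅_α`: fewer than `𝔠` codes, hence infinitely many `Z ∈ 𝒵` share one code.
Take `N` of them and let `F` be the finite set where two of them meet. A measure of norm `≤ 1` has
total mass `≤ 2` on the disjoint sets `Z \ F`, while non-separation by `𝔅_α` makes `μ, μ'` close on
the sets `B''` and on the finite sets `B ∩ Z ∩ F`. For `N` large some `Z` of the `N` is then not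
separated by its code.
-/

open Cardinal Function

universe u

section FinitelyAdditive

variable {S ι : Type*} {m m' : Set S → ℝ}

theorem FinAddOn.apply_union (hm : FinAddOn Set.univ m) {A B : Set S} (h : Disjoint A B) :
    m (A ∪ B) = m A + m B :=
  hm A trivial B trivial h

theorem FinAddOn.apply_empty (hm : FinAddOn Set.univ m) : m ∅ = 0 := by
  simpa using hm.apply_union (disjoint_bot_left (a := (∅ : Set S)))

theorem FinAddOn.sub_s14 (hm : FinAddOn Set.univ m) (hm' : FinAddOn Set.univ m') :
    FinAddOn Set.univ (m - m') := fun A _ B _ h => by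
  simp only [Pi.sub_apply, hm.apply_union h, hm'.apply_union h]
  ring

theorem FinAddOn.apply_biUnion_finset (hm : FinAddOn Set.univ m) {A : ι → Set S}
    (hA : Pairwise (Disjoint on A)) (s : Finset ι) : m (⋃ i ∈ s, A i) = ∑ i ∈ s, m (A i) := by
  classical
  induction s using Finset.induction_on with
  | empty => simp [hm.apply_empty]
  | insert a s ha ih =>
    rw [Finset.set_biUnion_insert, Finset.sum_insert ha, ← ih]
    refine hm.apply_union (Set.disjoint_iUnion₂_right.mpr fun i hi => hA ?_)
    rintro rfl
    exact ha hi

theorem FinAddOn.apply_ite_union (hm : FinAddOn Set.univ m) {E D : Set S} (hED : Disjoint E D)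
    (X Y : Set S) :
    m ((E ∪ D).ite X Y) = m Y + m (X ∩ E) + m (X ∩ D) - m (Y ∩ E) - m (Y ∩ D) := by
  have hX : m (X ∩ (E ∪ D)) = m (X ∩ E) + m (X ∩ D) := by
    rw [Set.inter_union_distrib_left,
      hm.apply_union (hED.mono Set.inter_subset_right Set.inter_subset_right)]
  have hY : m (Y ∩ (E ∪ D)) = m (Y ∩ E) + m (Y ∩ D) := by
    rw [Set.inter_union_distrib_left,
      hm.apply_union (hED.mono Set.inter_subset_right Set.inter_subset_right)]
  have hYsplit := hm.apply_union (Set.disjoint_sdiff_inter (s := Y) (t := E ∪ D)).symm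
  rw [Set.inter_union_sdiff] at hYsplit
  rw [Set.ite, hm.apply_union (Set.disjoint_sdiff_right.mono_left Set.inter_subset_right)]
  linarith

end FinitelyAdditive

namespace M1full

variable {S ι : Type*} {m m' : Set S → ℝ}

theorem abs_le_one (hm : m ∈ M1full S) (A : Set S) : |m A| ≤ 1 :=
  (le_add_of_nonneg_right (abs_nonneg _)).trans (hm.2 A trivial)

theorem sum_abs_le_two [Fintype ι] (hm : m ∈ M1full S) {A : ι → Set S}
    (hA : Pairwise (Disjoint on A)) : ∑ i, |m (A i)| ≤ 2 := by
  classical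
  set P := Finset.univ.filter fun i => 0 ≤ m (A i)
  set Q := Finset.univ.filter fun i => ¬ 0 ≤ m (A i)
  have hP : ∑ i ∈ P, |m (A i)| = m (⋃ i ∈ P, A i) := by
    rw [hm.1.apply_biUnion_finset hA]
    exact Finset.sum_congr rfl fun i hi => abs_of_nonneg (Finset.mem_filter.mp hi).2
  have hQ : ∑ i ∈ Q, |m (A i)| = - m (⋃ i ∈ Q, A i) := by
    rw [hm.1.apply_biUnion_finset hA, ← Finset.sum_neg_distrib]
    exact Finset.sum_congr rfl fun i hi => abs_of_neg (not_le.mp (Finset.mem_filter.mp hi).2)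
  rw [← Finset.sum_filter_add_sum_filter_not _ (fun i => 0 ≤ m (A i)), hP, hQ]
  linarith [abs_le.mp (abs_le_one hm (⋃ i ∈ P, A i)), abs_le.mp (abs_le_one hm (⋃ i ∈ Q, A i))]

theorem sum_abs_sub_le_four [Fintype ι] (hm : m ∈ M1full S) (hm' : m' ∈ M1full S)
    {A : ι → Set S} (hA : Pairwise (Disjoint on A)) : ∑ i, |m (A i) - m' (A i)| ≤ 4 :=
  calc ∑ i, |m (A i) - m' (A i)| ≤ ∑ i, (|m (A i)| + |m' (A i)|) :=
        Finset.sum_le_sum fun i _ => abs_sub _ _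
    _ ≤ 2 + 2 := by
        rw [Finset.sum_add_distrib]
        exact add_le_add (sum_abs_le_two hm hA) (sum_abs_le_two hm' hA)
    _ = 4 := by norm_num

/-- Pigeonhole: for each `i`, `|m - m'|` spreads a mass of at most `4` over the disjoint sets
`X i ∩ D j`. -/
theorem exists_sum_abs_sub_inter_lt [Fintype ι] {κ : Type*} [Fintype κ] (hm : m ∈ M1full S)
    (hm' : m' ∈ M1full S) {D : ι → Set S} (hD : Pairwise (Disjoint on D)) (X : κ → Set S)
    {δ : ℝ} (hN : 4 * Fintype.card κ < Fintype.card ι * δ) :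
    ∃ j, ∑ i, |m (X i ∩ D j) - m' (X i ∩ D j)| < δ := by
  have hXD : ∀ i, Pairwise (Disjoint on fun j => X i ∩ D j) := fun i j j' h =>
    (hD h).mono Set.inter_subset_right Set.inter_subset_right
  obtain ⟨j, -, hj⟩ := Finset.exists_lt_of_sum_lt (s := Finset.univ) (g := fun _ => δ) <|
    calc ∑ j, ∑ i, |m (X i ∩ D j) - m' (X i ∩ D j)|
        = ∑ i, ∑ j, |m (X i ∩ D j) - m' (X i ∩ D j)| := Finset.sum_comm
      _ ≤ ∑ _i : κ, (4 : ℝ) := Finset.sum_le_sum fun i _ => sum_abs_sub_le_four hm hm' (hXD i)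
      _ < ∑ _j : ι, δ := by simpa [mul_comm] using hN
  exact ⟨j, hj⟩

end M1full

section Separation

variable {S : Type*}

def SeparatesWith {κ : Type*} (C : κ → Set S) (ε : ℝ) (M M' : Set (Set S → ℝ)) : Prop :=
  ∀ m ∈ M, ∀ m' ∈ M', ∃ i, ε ≤ |m (C i) - m' (C i)|

/-- `SeparatedBy` asks for at least one set: the family is padded by a member of `𝔅`. -/
theorem separatedBy_of_separatesWith {𝔅 : Set (Set S)} (h𝔅 : 𝔅.Nonempty) {κ : Type*} [Finite κ]
    {C : κ → Set S} (hC : ∀ i, C i ∈ 𝔅) {ε : ℝ} (hε : 0 < ε) {M M' : Set (Set S → ℝ)}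
    (h : SeparatesWith C ε M M') : SeparatedBy 𝔅 M M' := by
  obtain ⟨A, hA⟩ := h𝔅
  obtain ⟨n, ⟨e⟩⟩ := Finite.exists_equiv_fin κ
  refine ⟨ε, hε, n + 1, n.succ_pos, Fin.cons A (C ∘ e.symm), Fin.cases hA fun i => hC _,
    fun m hm m' hm' => ?_⟩
  obtain ⟨i, hi⟩ := h m hm m' hm'
  exact ⟨(e i).succ, by simpa using hi⟩

theorem IsSetAlgebraOn.exists_ite_of_mem_genAlg {𝔅 : Set (Set S)} (h𝔅 : IsSetAlgebraOn 𝔅)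
    {Z A : Set S} (hA : A ∈ genAlg (𝔅 ∪ {Z})) : ∃ B' ∈ 𝔅, ∃ B'' ∈ 𝔅, A = Z.ite B' B'' := by
  have hempty : ∅ ∈ 𝔅 := Set.compl_univ (α := S) ▸ h𝔅.2.1 _ h𝔅.1
  induction hA with
  | base hA =>
    rcases hA with hA | rfl
    · exact ⟨_, hA, _, hA, (Set.ite_same _ _).symm⟩
    · exact ⟨_, h𝔅.1, ∅, hempty, by simp⟩
  | empty => exact ⟨∅, hempty, ∅, hempty, (Set.ite_same _ _).symm⟩
  | compl _ ih =>
    obtain ⟨B', hB', B'', hB'', rfl⟩ := ih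
    refine ⟨B'ᶜ, h𝔅.2.1 _ hB', B''ᶜ, h𝔅.2.1 _ hB'', ?_⟩
    ext x
    by_cases hx : x ∈ Z <;> simp [Set.ite, hx]
  | union _ _ ih₁ ih₂ =>
    obtain ⟨B', hB', B'', hB'', rfl⟩ := ih₁
    obtain ⟨C', hC', C'', hC'', rfl⟩ := ih₂
    refine ⟨B' ∪ C', h𝔅.2.2.1 _ hB' _ hC', B'' ∪ C'', h𝔅.2.2.1 _ hB'' _ hC'', ?_⟩
    ext x
    by_cases hx : x ∈ Z <;> simp [Set.ite, hx]

theorem SeparatedBy.exists_separatesWith_ite {𝔅 : Set (Set S)} (h𝔅 : IsSetAlgebraOn 𝔅)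
    {Z : Set S} {M M' : Set (Set S → ℝ)} (h : SeparatedBy (genAlg (𝔅 ∪ {Z})) M M') :
    ∃ k : ℕ, ∃ L : List (𝔅 × 𝔅),
      SeparatesWith (fun p : {p // p ∈ L} => Z.ite p.1.1 p.1.2) (1 / (k + 1)) M M' := by
  obtain ⟨ε, hε, n, -, B, hB, hsep⟩ := h
  choose B' hB' B'' hB'' hBeq using fun i => h𝔅.exists_ite_of_mem_genAlg (hB i)
  obtain ⟨k, hk⟩ := exists_nat_one_div_lt hε
  refine ⟨k, List.ofFn fun i => (⟨B' i, hB' i⟩, ⟨B'' i, hB'' i⟩), fun m hm m' hm' => ?_⟩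
  obtain ⟨i, hi⟩ := hsep m hm m' hm'
  refine ⟨⟨_, List.mem_ofFn.mpr ⟨i, rfl⟩⟩, hk.le.trans ?_⟩
  simpa only [hBeq] using hi

/-- Off the finite set `F` where two of the `W j` meet, the `W j` are disjoint, so `|μ - μ'|` is
small on `B ∩ W j \ F` for most `j`; on `B ∩ W j ∩ F ∈ 𝔅` and on `B'' ∈ 𝔅`, non-separation makes
`μ, μ'` close. -/
theorem exists_not_separatesWith_ite {𝔅 : Set (Set S)} (hfin : ∀ F : Set S, F.Finite → F ∈ 𝔅)
    {M M' : Set (Set S → ℝ)} (hM : M ⊆ M1full S) (hM' : M' ⊆ M1full S)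
    (hnsep : ¬ SeparatedBy 𝔅 M M') {κ : Type*} [Fintype κ] {B' B'' : κ → Set S}
    (hB'' : ∀ i, B'' i ∈ 𝔅) {ι : Type*} [Fintype ι] {ε : ℝ} (hε : 0 < ε)
    (hN : 16 * Fintype.card κ < Fintype.card ι * ε) (W : ι → Set S)
    (hW : ∀ j j', j ≠ j' → (W j ∩ W j').Finite) :
    ∃ j, ¬ SeparatesWith (fun i => (W j).ite (B' i) (B'' i)) ε M M' := by
  set F := ⋃ p : {p : ι × ι // p.1 ≠ p.2}, W p.1.1 ∩ W p.1.2
  have hF : F.Finite := Set.finite_iUnion fun p => hW _ _ p.2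
  have hD : Pairwise (Disjoint on fun j => W j \ F) := fun j j' hjj' =>
    Set.disjoint_left.mpr fun x hx hx' => hx.2 (Set.mem_iUnion.mpr ⟨⟨(j, j'), hjj'⟩, hx.1, hx'.1⟩)
  set X : κ ⊕ κ → Set S := Sum.elim B' B''
  set C : κ ⊕ ((κ ⊕ κ) × ι) → Set S := Sum.elim B'' fun q => X q.1 ∩ (W q.2 ∩ F)
  have hC : ∀ q, C q ∈ 𝔅 := by
    rintro (i | q)
    exacts [hB'' i, hfin _ (hF.subset (Set.inter_subset_right.trans Set.inter_subset_right))]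
  obtain ⟨μ, hμ, μ', hμ', hclose⟩ : ∃ μ ∈ M, ∃ μ' ∈ M', ∀ q, |μ (C q) - μ' (C q)| < ε / 8 := by
    simpa [SeparatesWith] using
      mt (separatedBy_of_separatesWith ⟨∅, hfin ∅ Set.finite_empty⟩ hC (by positivity)) hnsep
  obtain ⟨j, hj⟩ := M1full.exists_sum_abs_sub_inter_lt (hM hμ) (hM' hμ') hD X (δ := ε / 2)
    (by rw [Fintype.card_sum]; push_cast; linarith)
  refine ⟨j, fun hsep => ?_⟩
  obtain ⟨i, hi⟩ := hsep μ hμ μ' hμ'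
  rw [Fintype.sum_sum_type] at hj
  have htail₁ := Finset.single_le_sum (fun i _ => abs_nonneg _) (Finset.mem_univ i) (f := fun i =>
    |μ (X (Sum.inl i) ∩ (W j \ F)) - μ' (X (Sum.inl i) ∩ (W j \ F))|)
  have htail₂ := Finset.single_le_sum (fun i _ => abs_nonneg _) (Finset.mem_univ i) (f := fun i =>
    |μ (X (Sum.inr i) ∩ (W j \ F)) - μ' (X (Sum.inr i) ∩ (W j \ F))|)
  have h₁ := hclose (Sum.inl i)
  have h₂ := hclose (Sum.inr (Sum.inl i, j))
  have h₃ := hclose (Sum.inr (Sum.inr i, j))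
  change ε ≤ |(μ - μ') ((W j).ite (B' i) (B'' i))| at hi
  rw [← Set.inter_union_sdiff (W j) F,
    ((hM hμ).1.sub_s14 (hM' hμ').1).apply_ite_union Set.disjoint_sdiff_inter.symm] at hi
  simp only [C, X, Sum.elim_inl, Sum.elim_inr, Pi.sub_apply] at h₁ h₂ h₃ htail₁ htail₂ hi hj
  rw [abs_lt] at h₁ h₂ h₃
  rcases le_abs.mp hi with hi | hi <;>
  linarith [le_abs_self (μ (B' i ∩ (W j \ F)) - μ' (B' i ∩ (W j \ F))),
    neg_abs_le (μ (B' i ∩ (W j \ F)) - μ' (B' i ∩ (W j \ F))),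
    le_abs_self (μ (B'' i ∩ (W j \ F)) - μ' (B'' i ∩ (W j \ F))),
    neg_abs_le (μ (B'' i ∩ (W j \ F)) - μ' (B'' i ∩ (W j \ F)))]

end Separation

theorem mk_sigma_prod_list_le {ι : Type u} {A : ι → Type u} (hA : ∀ α, #(A α) ≤ max #ι ℵ₀) :
    #(Σ α, ℕ × List (A α × A α)) ≤ max #ι ℵ₀ := by
  have hc : ℵ₀ ≤ max #ι ℵ₀ := le_max_right _ _
  have hfiber : ∀ α, #(ℕ × List (A α × A α)) ≤ max #ι ℵ₀ := fun α => by
    simp only [mk_prod, mk_nat, lift_aleph0, lift_uzero]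
    refine mul_le_of_le hc hc ((mk_list_le_max _).trans (max_le hc ?_))
    rw [mk_prod, lift_id]
    exact mul_le_of_le hc (hA α) (hA α)
  rw [mk_sigma]
  exact (sum_le_mk_mul_iSup _).trans (mul_le_of_le hc (le_max_left _ _) (ciSup_le' hfiber))

open Cardinal in
theorem statement14_general (ι : Type) (hι : #ι < continuum)
    (𝔅 : ι → Set (Set ℕ)) (halg : ∀ α, IsSetAlgebraOn (𝔅 α))
    (hfin : ∀ α, ∀ F : Set ℕ, F.Finite → F ∈ 𝔅 α)
    (hcard : ∀ α, #↥(𝔅 α) ≤ max (#ι) ℵ₀)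
    (M M' : ι → Set (Set ℕ → ℝ))
    (hM : ∀ α, M α ⊆ M1full ℕ) (hM' : ∀ α, M' α ⊆ M1full ℕ)
    (hnsep : ∀ α, ¬ SeparatedBy (𝔅 α) (M α) (M' α))
    (𝒵 : Set (Set ℕ))
    (h𝒵ad : ∀ Z ∈ 𝒵, ∀ Z' ∈ 𝒵, Z ≠ Z' → (Z ∩ Z').Finite)
    (h𝒵card : #↥𝒵 = continuum) :
    ∃ Z ∈ 𝒵, ∀ α, ¬ SeparatedBy (genAlg (𝔅 α ∪ {Z})) (M α) (M' α) := by
  classical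
  by_contra! hsep
  have hdata (Z : 𝒵) : ∃ t : Σ α, ℕ × List (𝔅 α × 𝔅 α),
      SeparatesWith (fun p : {p // p ∈ t.2.2} => (Z : Set ℕ).ite p.1.1 p.1.2) (1 / (t.2.1 + 1))
        (M t.1) (M' t.1) := by
    obtain ⟨α, hα⟩ := hsep Z Z.2
    obtain ⟨k, L, hkL⟩ := hα.exists_separatesWith_ite (halg α)
    exact ⟨⟨α, k, L⟩, hkL⟩
  choose d hd using hdata
  have : Infinite 𝒵 := infinite_iff.mpr (h𝒵card ▸ aleph0_le_continuum)
  obtain ⟨⟨α, k, L⟩, hfiber⟩ := exists_infinite_fiber d <| h𝒵card ▸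
    (mk_sigma_prod_list_le hcard).trans_lt (max_lt hι aleph0_lt_continuum)
  obtain ⟨N, hN⟩ := exists_nat_gt (16 * Fintype.card {p // p ∈ L} * (k + 1 : ℝ))
  obtain ⟨s, hs⟩ := Infinite.exists_subset_card_eq (d ⁻¹' {⟨α, k, L⟩}) N
  obtain ⟨j, hj⟩ := exists_not_separatesWith_ite (hfin α) (hM α) (hM' α) (hnsep α)
    (B' := fun p : {p // p ∈ L} => p.1.1) (fun p => p.1.2.2) (ε := 1 / (k + 1)) (by positivity)
    (by rwa [Fintype.card_coe, hs, mul_one_div, lt_div_iff₀ (by positivity)])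
    (fun Z : s => (Z : Set ℕ)) fun Z Z' hZZ' =>
      h𝒵ad _ Z.1.1.2 _ Z'.1.1.2 fun h => hZZ' (Subtype.ext (Subtype.ext (Subtype.ext h)))
  have hdj := hd j.1.1
  rw [Set.mem_singleton_iff.mp j.1.2] at hdj
  exact hj hdj

open Cardinal in
/-- Haydon's lemma, measure-theoretic version. Given fewer than `𝔠` many algebras
`𝔅_α` of subsets of `ω` (each containing all finite sets and of size at most
`max(|index|, ℵ₀)`) together with pairs `(M_α, M'_α)` of subsets of `M₁(P(ω))` that are
not `𝔅_α`-separated, then for every almost disjoint family `𝒵` of infinite subsets of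
`ω` with `|𝒵| = 𝔠` there is `Z ∈ 𝒵` such that no pair `(M_α, M'_α)` is
`𝔅_α[Z]`-separated. -/
theorem statement14 (ι : Type) (hι : #ι < continuum)
    (𝔅 : ι → Set (Set ℕ)) (halg : ∀ α, IsSetAlgebraOn (𝔅 α))
    (hfin : ∀ α, ∀ F : Set ℕ, F.Finite → F ∈ 𝔅 α)
    (hcard : ∀ α, #↥(𝔅 α) ≤ max (#ι) ℵ₀)
    (M M' : ι → Set (Set ℕ → ℝ))
    (hM : ∀ α, M α ⊆ M1full ℕ) (hM' : ∀ α, M' α ⊆ M1full ℕ)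
    (hnsep : ∀ α, ¬ SeparatedBy (𝔅 α) (M α) (M' α))
    (𝒵 : Set (Set ℕ)) (h𝒵inf : ∀ Z ∈ 𝒵, Z.Infinite)
    (h𝒵ad : ∀ Z ∈ 𝒵, ∀ Z' ∈ 𝒵, Z ≠ Z' → (Z ∩ Z').Finite)
    (h𝒵card : #↥𝒵 = continuum) :
    ∃ Z ∈ 𝒵, ∀ α, ¬ SeparatedBy (genAlg (𝔅 α ∪ {Z})) (M α) (M' α) :=
  statement14_general ι hι 𝔅 halg hfin hcard M M' hM hM' hnsep 𝒵 h𝒵ad h𝒵card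
end
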